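/- arXiv:2205.04558 — 6 statements merged into one kernel-verified Lean document; each statement's English description precedes it below -/
import Mathlib

section
/- Let $G$ be a group acting on an algebra $B$ over $\ell$, and let $S$ be a $G$-set. Let $M_S B$ denote the algebra of finitely supported $S\times S$ matrices over $B$, with $G$-action $g\cdot(e_{s,t}\otimes b) = e_{gs,gt}\otimes g\cdot b$. Then the map $R_{S,B}: (M_S B) \rtimes G \to M_{|S|}(B \rtimes G)$ defined by $R_{S,B}((e_{s,t}\otimes b)\rtimes g) = e_{s, g^{-1}t} \otimes (b \rtimes g)$ is an isomorphism of algebras (where $M_{|S|}$ denotes matrices indexed by the underlying set of $S$). -/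
/-!
All maps involved are additive and both products are biadditive, so every identity can be
checked on elementary tensors `(e_{s,t} ⊗ b) ⋊ g`. On these, `R_{S,B}` is a bijection of the
index sets `(g, s, t) ↦ ((s, g⁻¹t), g)`, with inverse `((s, t), g) ↦ (g, s, gt)`. For
multiplicativity, `e_{s,t} · e_{gs',gt'}` is nonzero iff `g⁻¹t = s'`, which is exactly the
condition for `e_{s,g⁻¹t} · e_{s',g'⁻¹t'}` to be nonzero, and the surviving column index
`(gg')⁻¹ g t' = g'⁻¹ t'` is the same on both sides.
-/

/-- Crossed product multiplication on `⊕_{g ∈ G} A`. -/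
noncomputable def crossedMul {G : Type} [Group G] {A : Type} [AddCommMonoid A]
    (mulA : A → A → A) (act : G → A → A) (a b : G →₀ A) : G →₀ A :=
  a.sum fun g x => b.sum fun g' y => Finsupp.single (g * g') (mulA x (act g y))

/-- Matrix multiplication on finitely supported `S × S` matrices with entries
in `R`, for a given multiplication `mulR` on entries. -/
noncomputable def matMul {S R : Type} [DecidableEq S] [AddCommMonoid R]
    (mulR : R → R → R) (a b : (S × S) →₀ R) : (S × S) →₀ R :=
  a.sum fun p x => b.sum fun q y =>
    if p.2 = q.1 then Finsupp.single (p.1, q.2) (mulR x y) else 0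

/-- The `G`-action on `M_S B`: `g • (e_{s,t} ⊗ b) = e_{gs,gt} ⊗ g•b`. -/
noncomputable def matAct {G S B : Type} [Group G] [MulAction G S]
    [AddCommMonoid B] [DistribMulAction G B] (g : G) (m : (S × S) →₀ B) :
    (S × S) →₀ B :=
  m.sum fun p x => Finsupp.single (g • p.1, g • p.2) (g • x)

/-- The map `R_{S,B}`: `(e_{s,t} ⊗ b) ⋊ g ↦ e_{s,g⁻¹t} ⊗ (b ⋊ g)`. -/
noncomputable def Rmap {G S B : Type} [Group G] [MulAction G S] [AddCommMonoid B]
    (x : G →₀ ((S × S) →₀ B)) : (S × S) →₀ (G →₀ B) :=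
  x.sum fun g m => m.sum fun p b =>
    Finsupp.single (p.1, g⁻¹ • p.2) (Finsupp.single g b)

open Finsupp

theorem Finsupp.induction_linear_single_single {ι κ M : Type*} [AddZeroClass M]
    {motive : (ι →₀ κ →₀ M) → Prop} (x : ι →₀ κ →₀ M) (zero : motive 0)
    (add : ∀ x y, motive x → motive y → motive (x + y))
    (single_single : ∀ i k m, motive (single i (single k m))) : motive x := by
  induction x using Finsupp.induction_linear with
  | zero => exact zero
  | add x y hx hy => exact add x y hx hy
  | single i m =>
    induction m using Finsupp.induction_linear with
    | zero => simpa using zero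
    | add m m' hm hm' => simpa [single_add] using add _ _ hm hm'
    | single k b => exact single_single i k b

section MatMul

variable {S R : Type} [DecidableEq S] [AddCommMonoid R] (mulR : R → R → R)

@[simp]
theorem matMul_zero_left (b : (S × S) →₀ R) : matMul mulR 0 b = 0 := by
  simp [matMul]

@[simp]
theorem matMul_zero_right (a : (S × S) →₀ R) : matMul mulR a 0 = 0 := by
  simp [matMul]

theorem matMul_add_left (hzero : ∀ y, mulR 0 y = 0)
    (hadd : ∀ x x' y, mulR (x + x') y = mulR x y + mulR x' y) (a a' b : (S × S) →₀ R) :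
    matMul mulR (a + a') b = matMul mulR a b + matMul mulR a' b := by
  refine sum_add_index' (fun p => by simp [hzero]) fun p x x' => ?_
  rw [← sum_add]
  refine sum_congr fun q _ => ?_
  split_ifs <;> simp [hadd, single_add]

theorem matMul_add_right (hzero : ∀ x, mulR x 0 = 0)
    (hadd : ∀ x y y', mulR x (y + y') = mulR x y + mulR x y') (a b b' : (S × S) →₀ R) :
    matMul mulR a (b + b') = matMul mulR a b + matMul mulR a b' := by
  unfold matMul
  rw [← sum_add]
  refine sum_congr fun p _ => sum_add_index' (fun q => by simp [hzero]) fun q y y' => ?_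
  split_ifs <;> simp [hadd, single_add]

theorem matMul_single_single (hzero_left : ∀ y, mulR 0 y = 0)
    (hzero_right : ∀ x, mulR x 0 = 0) (s t s' t' : S) (x y : R) :
    matMul mulR (single (s, t) x) (single (s', t') y) =
      if t = s' then single (s, t') (mulR x y) else 0 := by
  rw [matMul, sum_single_index (by simp [hzero_left]), sum_single_index (by simp [hzero_right])]

end MatMul

section CrossedMul

variable {G A : Type} [Group G] [AddCommMonoid A] (mulA : A → A → A) (act : G → A → A)

@[simp]
theorem crossedMul_zero_left (b : G →₀ A) : crossedMul mulA act 0 b = 0 := by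
  simp [crossedMul]

@[simp]
theorem crossedMul_zero_right (a : G →₀ A) : crossedMul mulA act a 0 = 0 := by
  simp [crossedMul]

theorem crossedMul_add_left (hzero : ∀ y, mulA 0 y = 0)
    (hadd : ∀ x x' y, mulA (x + x') y = mulA x y + mulA x' y) (a a' b : G →₀ A) :
    crossedMul mulA act (a + a') b = crossedMul mulA act a b + crossedMul mulA act a' b := by
  refine sum_add_index' (fun g => by simp [hzero]) fun g x x' => ?_
  rw [← sum_add]
  exact sum_congr fun g' _ => by simp [hadd, single_add]

theorem crossedMul_add_right (hzero : ∀ x, mulA x 0 = 0) (hact_zero : ∀ g, act g 0 = 0)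
    (hadd : ∀ x y y', mulA x (y + y') = mulA x y + mulA x y')
    (hact_add : ∀ g y y', act g (y + y') = act g y + act g y') (a b b' : G →₀ A) :
    crossedMul mulA act a (b + b') = crossedMul mulA act a b + crossedMul mulA act a b' := by
  unfold crossedMul
  rw [← sum_add]
  exact sum_congr fun g _ => sum_add_index' (fun g' => by simp [hact_zero, hzero])
    fun g' y y' => by simp [hact_add, hadd, single_add]

theorem crossedMul_single_single (hzero_left : ∀ y, mulA 0 y = 0)
    (hzero_right : ∀ x, mulA x 0 = 0) (hact_zero : ∀ g, act g 0 = 0) (g g' : G) (x y : A) :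
    crossedMul mulA act (single g x) (single g' y) = single (g * g') (mulA x (act g y)) := by
  rw [crossedMul, sum_single_index (by simp [hzero_left]),
    sum_single_index (by simp [hact_zero, hzero_right])]

end CrossedMul

section MatAct

variable {G S B : Type} [Group G] [MulAction G S] [AddCommMonoid B] [DistribMulAction G B]

@[simp]
theorem matAct_zero (g : G) : matAct (S := S) (B := B) g 0 = 0 := by
  simp [matAct]

theorem matAct_add (g : G) (m m' : (S × S) →₀ B) :
    matAct g (m + m') = matAct g m + matAct g m' :=
  sum_add_index' (fun p => by simp) fun p x x' => by simp [smul_add, single_add]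

theorem matAct_single (g : G) (s t : S) (x : B) :
    matAct g (single (s, t) x) = single (g • s, g • t) (g • x) := by
  rw [matAct, sum_single_index (by simp)]

end MatAct

section Rmap

variable {G S B : Type} [Group G] [MulAction G S] [AddCommMonoid B]

@[simp]
theorem Rmap_zero : Rmap (G := G) (S := S) (B := B) 0 = 0 := by
  simp [Rmap]

theorem Rmap_add (a b : G →₀ (S × S) →₀ B) : Rmap (a + b) = Rmap a + Rmap b :=
  sum_add_index' (fun g => by simp) fun g m m' =>
    sum_add_index' (fun p => by simp) fun p x x' => by simp [single_add]

theorem Rmap_single_single (g : G) (s t : S) (b : B) :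
    Rmap (single g (single (s, t) b)) = single (s, g⁻¹ • t) (single g b) := by
  rw [Rmap, sum_single_index (by simp), sum_single_index (by simp)]

theorem Rmap_smul {ℓ : Type*} [DistribSMul ℓ B] (c : ℓ) (a : G →₀ (S × S) →₀ B) :
    Rmap (c • a) = c • Rmap a := by
  induction a using Finsupp.induction_linear_single_single with
  | zero => simp
  | add a a' ha ha' => rw [smul_add, Rmap_add, Rmap_add, ha, ha', smul_add]
  | single_single g p b =>
    obtain ⟨s, t⟩ := p
    simp [smul_single, Rmap_single_single]

noncomputable def RmapInv (y : (S × S) →₀ G →₀ B) : G →₀ (S × S) →₀ B :=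
  y.sum fun p f => f.sum fun g b => single g (single (p.1, g • p.2) b)

@[simp]
theorem RmapInv_zero : RmapInv (G := G) (S := S) (B := B) 0 = 0 := by
  simp [RmapInv]

theorem RmapInv_add (a b : (S × S) →₀ G →₀ B) : RmapInv (a + b) = RmapInv a + RmapInv b :=
  sum_add_index' (fun p => by simp) fun p f f' =>
    sum_add_index' (fun g => by simp) fun g x x' => by simp [single_add]

theorem RmapInv_single_single (s t : S) (g : G) (b : B) :
    RmapInv (single (s, t) (single g b)) = single g (single (s, g • t) b) := by
  rw [RmapInv, sum_single_index (by simp), sum_single_index (by simp)]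

theorem RmapInv_Rmap (x : G →₀ (S × S) →₀ B) : RmapInv (Rmap x) = x := by
  induction x using Finsupp.induction_linear_single_single with
  | zero => simp
  | add x y hx hy => rw [Rmap_add, RmapInv_add, hx, hy]
  | single_single g p b =>
    obtain ⟨s, t⟩ := p
    simp [Rmap_single_single, RmapInv_single_single]

theorem Rmap_RmapInv (y : (S × S) →₀ G →₀ B) : Rmap (RmapInv y) = y := by
  induction y using Finsupp.induction_linear_single_single with
  | zero => simp
  | add x y hx hy => rw [RmapInv_add, Rmap_add, hx, hy]
  | single_single p g b =>
    obtain ⟨s, t⟩ := p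
    simp [Rmap_single_single, RmapInv_single_single]

theorem Rmap_bijective : Function.Bijective (Rmap (G := G) (S := S) (B := B)) :=
  ⟨Function.LeftInverse.injective RmapInv_Rmap, Function.RightInverse.surjective Rmap_RmapInv⟩

end Rmap

section Multiplicativity

variable {G S B : Type} [Group G] [MulAction G S] [DecidableEq S]
  [NonUnitalNonAssocSemiring B] [DistribMulAction G B]

local notation "mulMat" => crossedMul (A := (S × S) →₀ B) (matMul (R := B) (· * ·)) matAct
local notation "mulCrossed" => matMul (crossedMul (A := B) (· * ·) (fun (g : G) x => g • x))

theorem Rmap_crossedMul_single_single (g g' : G) (s t s' t' : S) (x y : B) :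
    Rmap (mulMat (single g (single (s, t) x)) (single g' (single (s', t') y))) =
      mulCrossed (Rmap (single g (single (s, t) x))) (Rmap (single g' (single (s', t') y))) := by
  rw [crossedMul_single_single _ _ (matMul_zero_left _) (matMul_zero_right _) matAct_zero,
    matAct_single, matMul_single_single _ zero_mul mul_zero, Rmap_single_single,
    Rmap_single_single, matMul_single_single _ (crossedMul_zero_left _ _)
      (crossedMul_zero_right _ _),
    crossedMul_single_single _ _ zero_mul mul_zero smul_zero]
  simp only [inv_smul_eq_iff]
  split_ifs
  · rw [Rmap_single_single, mul_inv_rev, mul_smul, inv_smul_smul]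
  · simp

theorem Rmap_crossedMul (a b : G →₀ (S × S) →₀ B) :
    Rmap (mulMat a b) = mulCrossed (Rmap a) (Rmap b) := by
  induction a using Finsupp.induction_linear_single_single with
  | zero => simp
  | add a a' ha ha' =>
    rw [crossedMul_add_left _ _ (matMul_zero_left _) (matMul_add_left _ zero_mul add_mul),
      Rmap_add, Rmap_add, ha, ha',
      matMul_add_left _ (crossedMul_zero_left _ _) (crossedMul_add_left _ _ zero_mul add_mul)]
  | single_single g p x =>
    induction b using Finsupp.induction_linear_single_single with
    | zero => simp
    | add b b' hb hb' =>
      rw [crossedMul_add_right _ _ (matMul_zero_right _) matAct_zero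
          (matMul_add_right _ mul_zero mul_add) matAct_add,
        Rmap_add, Rmap_add, hb, hb', matMul_add_right _ (crossedMul_zero_right _ _)
          (crossedMul_add_right _ _ mul_zero smul_zero mul_add smul_add)]
    | single_single g' q y => exact Rmap_crossedMul_single_single g g' p.1 p.2 q.1 q.2 x y

end Multiplicativity

theorem stmt2_general {ℓ G S B : Type} [CommRing ℓ] [Group G] [MulAction G S]
    [DecidableEq S] [NonUnitalNonAssocSemiring B] [Module ℓ B]
    [DistribMulAction G B] :
    Function.Bijective (Rmap (G := G) (S := S) (B := B)) ∧
    (∀ (a b : G →₀ ((S × S) →₀ B)), Rmap (crossedMul (A := (S × S) →₀ B) (matMul (R := B) (· * ·)) matAct a b) =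
        matMul (crossedMul (A := B) (· * ·) (fun g x => g • x)) (Rmap a) (Rmap b)) ∧
    (∀ (a b : G →₀ ((S × S) →₀ B)), Rmap (a + b) = Rmap a + Rmap b) ∧
    (∀ (c : ℓ) (a : G →₀ ((S × S) →₀ B)), Rmap (c • a) = c • Rmap a) :=
  ⟨Rmap_bijective, Rmap_crossedMul, Rmap_add, Rmap_smul⟩

/-- `R_{S,B} : (M_S B) ⋊ G → M_{|S|}(B ⋊ G)` is an
isomorphism of (`ℓ`-)algebras: it is bijective, additive, `ℓ`-linear, and
multiplicative. -/
theorem stmt2 {ℓ G S B : Type} [CommRing ℓ] [Group G] [MulAction G S]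
    [DecidableEq S] [NonUnitalNonAssocSemiring B] [Module ℓ B]
    [DistribMulAction G B]
    (hsm : ∀ (g : G) (a b : B), g • (a * b) = (g • a) * (g • b)) :
    Function.Bijective (Rmap (G := G) (S := S) (B := B)) ∧
    (∀ (a b : G →₀ ((S × S) →₀ B)), Rmap (crossedMul (A := (S × S) →₀ B) (matMul (R := B) (· * ·)) matAct a b) =
        matMul (crossedMul (A := B) (· * ·) (fun g x => g • x)) (Rmap a) (Rmap b)) ∧
    (∀ (a b : G →₀ ((S × S) →₀ B)), Rmap (a + b) = Rmap a + Rmap b) ∧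
    (∀ (c : ℓ) (a : G →₀ ((S × S) →₀ B)), Rmap (c • a) = c • Rmap a) :=
  stmt2_general
end

section
/- The isomorphism $R_{S,B}: (M_S B)\rtimes G \to M_{|S|}(B\rtimes G)$ given by $R_{S,B}((e_{s,t}\otimes b)\rtimes g) = e_{s,g^{-1}t}\otimes(b\rtimes g)$ is natural in $S$ with respect to injective morphisms of $G$-sets and natural in $B$ with respect to $G$-equivariant algebra homomorphisms. -/
/-- The map on finitely supported matrices induced by a map of index sets:
`e_{s,t} ⊗ x ↦ e_{f s, f t} ⊗ x`. -/
noncomputable def matMap {S S' R : Type} [AddCommMonoid R] (f : S → S')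
    (m : (S × S) →₀ R) : (S' × S') →₀ R :=
  m.sum fun p x => Finsupp.single (f p.1, f p.2) x

/-- The map `(M_S B) ⋊ G → (M_{S'} B) ⋊ G` induced by `f : S → S'`. -/
noncomputable def cpMatMap {G S S' B : Type} [AddCommMonoid B] (f : S → S')
    (x : G →₀ ((S × S) →₀ B)) : G →₀ ((S' × S') →₀ B) :=
  x.sum fun g m => Finsupp.single g (matMap f m)

/-- The map `(M_S B) ⋊ G → (M_S B') ⋊ G` induced by `φ : B → B'`. -/
noncomputable def cpCoeffMap {G S B B' : Type} [AddCommMonoid B]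
    [AddCommMonoid B'] (φ : B → B') (x : G →₀ ((S × S) →₀ B)) :
    G →₀ ((S × S) →₀ B') :=
  x.sum fun g m => Finsupp.single g (m.sum fun p b => Finsupp.single p (φ b))

/-- The map `(B ⋊ G) → (B' ⋊ G)` induced by `φ : B → B'`. -/
noncomputable def entryMap {G B B' : Type} [AddCommMonoid B] [AddCommMonoid B']
    (φ : B → B') (e : G →₀ B) : G →₀ B' :=
  e.sum fun g b => Finsupp.single g (φ b)

/-- The map `M_{|S|}(B ⋊ G) → M_{|S|}(B' ⋊ G)` induced by `φ : B → B'`. -/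
noncomputable def matEntryMap {G S B B' : Type} [AddCommMonoid B]
    [AddCommMonoid B'] (φ : B → B') (m : (S × S) →₀ (G →₀ B)) :
    (S × S) →₀ (G →₀ B') :=
  m.sum fun p e => Finsupp.single p (entryMap φ e)

open Finsupp

theorem Finsupp.sum_single_apply_eq_mapRange {α M N : Type} [AddCommMonoid M] [AddCommMonoid N]
    (F : M →+ N) (x : α →₀ M) :
    (x.sum fun a m => single a (F m)) = mapRange F F.map_zero x := by
  rw [← mapRange.addMonoidHom_apply]
  conv_rhs => rw [← sum_single x, map_finsuppSum]
  simp only [mapRange.addMonoidHom_apply, mapRange_single]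

section

variable {G S S' B B' : Type} [AddCommMonoid B] [AddCommMonoid B']

theorem matMap_eq_mapDomain (f : S → S') :
    (matMap f : ((S × S) →₀ B) → _) = mapDomain (Prod.map f f) :=
  rfl

theorem cpMatMap_eq_mapRange (f : S → S') (x : G →₀ ((S × S) →₀ B)) :
    cpMatMap f x = mapRange (mapDomain (Prod.map f f)) mapDomain_zero x :=
  sum_single_apply_eq_mapRange (mapDomain.addMonoidHom (Prod.map f f)) x

theorem entryMap_eq_mapRange (φ : B →+ B') :
    (entryMap φ : (G →₀ B) → _) = mapRange φ φ.map_zero :=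
  funext (sum_single_apply_eq_mapRange φ)

theorem matEntryMap_eq_mapRange (φ : B →+ B') (m : (S × S) →₀ (G →₀ B)) :
    matEntryMap φ m = mapRange (mapRange φ φ.map_zero) mapRange_zero m := by
  rw [matEntryMap, entryMap_eq_mapRange]
  exact sum_single_apply_eq_mapRange (mapRange.addMonoidHom φ) m

theorem cpCoeffMap_eq_mapRange (φ : B →+ B') (x : G →₀ ((S × S) →₀ B)) :
    cpCoeffMap φ x = mapRange (mapRange φ φ.map_zero) mapRange_zero x := by
  simp only [cpCoeffMap, sum_single_apply_eq_mapRange φ]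
  exact sum_single_apply_eq_mapRange (mapRange.addMonoidHom φ) x

variable [Group G] [MulAction G S] [MulAction G S']

variable (G S B) in
noncomputable def Rmap.addMonoidHom : (G →₀ ((S × S) →₀ B)) →+ ((S × S) →₀ (G →₀ B)) :=
  liftAddHom fun g => liftAddHom fun p =>
    (singleAddHom (p.1, g⁻¹ • p.2)).comp (singleAddHom g)

theorem Rmap.coe_addMonoidHom : ⇑(Rmap.addMonoidHom G S B) = Rmap := by
  ext x : 1
  simp only [Rmap.addMonoidHom, liftAddHom_apply, Rmap]
  rfl

@[simp]
theorem Rmap.addMonoidHom_single_single (g : G) (p : S × S) (b : B) :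
    Rmap.addMonoidHom G S B (single g (single p b)) = single (p.1, g⁻¹ • p.2) (single g b) := by
  rw [Rmap.addMonoidHom, liftAddHom_apply_single, liftAddHom_apply_single]
  rfl

theorem Rmap_cpMatMap (f : S → S') (hf : ∀ (g : G) (s : S), f (g • s) = g • f s)
    (x : G →₀ ((S × S) →₀ B)) :
    Rmap (cpMatMap f x) = matMap f (Rmap x) := by
  have h : (Rmap.addMonoidHom G S' B).comp
        (mapRange.addMonoidHom (mapDomain.addMonoidHom (Prod.map f f))) =
      (mapDomain.addMonoidHom (Prod.map f f)).comp (Rmap.addMonoidHom G S B) := by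
    ext g p b : 4
    simp [hf]
  rw [cpMatMap_eq_mapRange, matMap_eq_mapDomain, ← Rmap.coe_addMonoidHom]
  exact DFunLike.congr_fun h x

theorem Rmap_cpCoeffMap (φ : B →+ B') (x : G →₀ ((S × S) →₀ B)) :
    Rmap (cpCoeffMap φ x) = matEntryMap φ (Rmap x) := by
  have h : (Rmap.addMonoidHom G S B').comp (mapRange.addMonoidHom (mapRange.addMonoidHom φ)) =
      (mapRange.addMonoidHom (mapRange.addMonoidHom φ)).comp (Rmap.addMonoidHom G S B) := by
    ext g p b : 4
    simp
  rw [cpCoeffMap_eq_mapRange, matEntryMap_eq_mapRange, ← Rmap.coe_addMonoidHom]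
  exact DFunLike.congr_fun h x

end

theorem stmt3_general {G S S' B B' : Type} [Group G]
    [MulAction G S] [MulAction G S']
    [NonUnitalNonAssocSemiring B]
    [NonUnitalNonAssocSemiring B']
    (f : S → S')
    (hfe : ∀ (g : G) (s : S), f (g • s) = g • f s)
    (φ : B →+ B') :
    (∀ x : G →₀ ((S × S) →₀ B), Rmap (cpMatMap f x) = matMap f (Rmap x)) ∧
    (∀ x : G →₀ ((S × S) →₀ B),
      Rmap (cpCoeffMap (⇑φ) x) = matEntryMap (⇑φ) (Rmap x)) :=
  ⟨Rmap_cpMatMap f hfe, Rmap_cpCoeffMap φ⟩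

/-- Naturality of `R_{S,B}` in `S` (w.r.t. injective
morphisms of `G`-sets) and in `B` (w.r.t. `G`-equivariant algebra
homomorphisms). -/
theorem stmt3 {ℓ G S S' B B' : Type} [CommRing ℓ] [Group G]
    [MulAction G S] [MulAction G S']
    [NonUnitalNonAssocSemiring B] [Module ℓ B] [DistribMulAction G B]
    [NonUnitalNonAssocSemiring B'] [Module ℓ B'] [DistribMulAction G B']
    (f : S → S') (hf : Function.Injective f)
    (hfe : ∀ (g : G) (s : S), f (g • s) = g • f s)
    (φ : B →+ B') (hφmul : ∀ a b : B, φ (a * b) = φ a * φ b)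
    (hφlin : ∀ (c : ℓ) (b : B), φ (c • b) = c • φ b)
    (hφact : ∀ (g : G) (b : B), φ (g • b) = g • φ b) :
    (∀ x : G →₀ ((S × S) →₀ B), Rmap (cpMatMap f x) = matMap f (Rmap x)) ∧
    (∀ x : G →₀ ((S × S) →₀ B),
      Rmap (cpCoeffMap (⇑φ) x) = matEntryMap (⇑φ) (Rmap x)) :=
  stmt3_general f hfe φ
end

section
/- Let $G$ be a group, $H \subseteq G$ a subgroup, and $B$ a $G$-algebra. Fix a section $s: G/H \to G$ of the projection with $s(H) = e$, and write $\hat g = s(gH)$. Then the map $\alpha: \mathcal{A}(B \rtimes G/H) \to M_{|G/H|}(B \rtimes H)$ defined on $b\otimes g \in (B\rtimes G/H)(sH, tH) = B \otimes \ell[tHs^{-1}]$ by $\alpha(b\otimes g) = e_{tH, sH} \otimes (\hat t^{-1}\cdot b) \rtimes \hat t^{-1} g \hat s$ is an isomorphism of $\ell$-algebras. -/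
/-!
Statement 9: the map `α : 𝒜(B ⋊ G/H) → M_{|G/H|}(B ⋊ H)` given on a
generator `b ⊗ g ∈ (B ⋊ G/H)(sH, tH)` by
`α(b ⊗ g) = e_{tH,sH} ⊗ (t̂⁻¹·b) ⋊ t̂⁻¹ g ŝ` is an isomorphism of
`ℓ`-algebras (for a chosen section `s` of `G → G/H` with `s(H) = e`).

The hom-module `(B ⋊ G/H)(x, y) = B ⊗ ℓ[yHx⁻¹]` is modeled as
`{g : G // g • x = y} →₀ B`; `𝒜` as a dependent direct sum over pairs of
objects, `B ⋊ H` as `↥H →₀ B`, and matrices as `(G/H × G/H) →₀ (↥H →₀ B)`.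
-/

open scoped Classical

variable {ℓ G B : Type} [CommRing ℓ] [Group G]
variable [NonUnitalNonAssocSemiring B] [Module ℓ B] [DistribMulAction G B]

/-- The hom-module `(B ⋊ G/H)(x,y) = B ⊗ ℓ[yHx⁻¹]`. -/
abbrev HomMod (H : Subgroup G) (B : Type) [AddCommMonoid B] (x y : G ⧸ H) :=
  {g : G // g • x = y} →₀ B

/-- Composition in the category `B ⋊ G/H`:
`(b ⊗ g) ∘ (b' ⊗ g') = b (g·b') ⊗ g g'`. -/
noncomputable def catComp {H : Subgroup G} {x y z : G ⧸ H}
    (m2 : HomMod H B y z) (m1 : HomMod H B x y) : HomMod H B x z :=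
  m2.sum fun g b => m1.sum fun g' b' =>
    Finsupp.single ⟨g.1 * g'.1, by rw [mul_smul, g'.2]; exact g.2⟩
      (b * (g.1 • b'))

/-- `𝒜(B ⋊ G/H) = ⊕_{x,y} (B ⋊ G/H)(x,y)`. -/
def ACat (H : Subgroup G) (B : Type) [AddCommMonoid B] :=
  Π₀ p : (G ⧸ H) × (G ⧸ H), HomMod H B p.1 p.2

noncomputable instance (H : Subgroup G) : AddCommMonoid (ACat H B) :=
  inferInstanceAs (AddCommMonoid (Π₀ p : (G ⧸ H) × (G ⧸ H), HomMod H B p.1 p.2))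

noncomputable instance (H : Subgroup G) : Module ℓ (ACat H B) :=
  inferInstanceAs (Module ℓ (Π₀ p : (G ⧸ H) × (G ⧸ H), HomMod H B p.1 p.2))

/-- Multiplication of `𝒜(B ⋊ G/H)`. -/
noncomputable def amul {H : Subgroup G} (a b : ACat H B) : ACat H B :=
  DFinsupp.sum a fun p m => DFinsupp.sum b fun q m' =>
    if h : q.2 = p.1 then
      DFinsupp.single (q.1, p.2) (catComp m (h ▸ m')) else 0

/-- The crossed product multiplication of `B ⋊ H`. -/
noncomputable def hcMul {H : Subgroup G} (e f : (↥H) →₀ B) : (↥H) →₀ B :=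
  e.sum fun h b => f.sum fun h' b' =>
    Finsupp.single (h * h') (b * ((h : G) • b'))

/-- Matrix multiplication on `(S × S) →₀ R` for a multiplication on `R`. -/
noncomputable def matMulGen {S R : Type} [AddCommMonoid R] (mulR : R → R → R)
    (a b : (S × S) →₀ R) : (S × S) →₀ R :=
  a.sum fun p x => b.sum fun q y =>
    if p.2 = q.1 then Finsupp.single (p.1, q.2) (mulR x y) else 0

theorem section_mem {H : Subgroup G} (s : G ⧸ H → G)
    (hs : ∀ x, QuotientGroup.mk (s x) = x) {x y : G ⧸ H}
    (g : {g : G // g • x = y}) : (s y)⁻¹ * g.1 * s x ∈ H := by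
  have h1 : (QuotientGroup.mk (s y) : G ⧸ H) = QuotientGroup.mk (g.1 * s x) := by
    have h2 : g.1 • (QuotientGroup.mk (s x) : G ⧸ H) = QuotientGroup.mk (g.1 * s x) := rfl
    rw [hs, ← h2, hs]
    exact g.2.symm
  have := QuotientGroup.eq.mp h1
  rwa [← mul_assoc] at this

/-- The map `α : 𝒜(B ⋊ G/H) → M_{|G/H|}(B ⋊ H)`:
`b ⊗ g ∈ Hom(sH, tH) ↦ e_{tH,sH} ⊗ (t̂⁻¹ · b) ⋊ (t̂⁻¹ g ŝ)`. -/
noncomputable def alphaMap {H : Subgroup G} (s : G ⧸ H → G)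
    (hs : ∀ x, QuotientGroup.mk (s x) = x) (a : ACat H B) :
    ((G ⧸ H) × (G ⧸ H)) →₀ ((↥H) →₀ B) :=
  DFinsupp.sum a fun p m => m.sum fun g b =>
    Finsupp.single (p.2, p.1)
      (Finsupp.single ⟨(s p.2)⁻¹ * g.1 * s p.1, section_mem s hs g⟩
        ((s p.2)⁻¹ • b))

/-!
Each hom-module `(B ⋊ G/H)(x, y)` is free over `B` on the arrows `g` with `g • x = y`, and
conjugating such a `g` by the chosen representatives gives `(s y)⁻¹ g (s x) ∈ H`; conversely
`h ∈ H` comes from the arrow `s y * h * (s x)⁻¹`. On generators these two recipes (together with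
the twist of the coefficient by `(s y)⁻¹`) are inverse to each other, and they turn composition of
arrows into the crossed-product multiplication, because the representative `s y` of the middle
object cancels. Everything else is additivity.
-/

namespace DFinsupp

variable {ι : Type*} {β : ι → Type*} [DecidableEq ι] [∀ i, AddZeroClass (β i)]

theorem induction_linear {p : (Π₀ i, β i) → Prop} (f : Π₀ i, β i) (h0 : p 0)
    (hadd : ∀ f g, p f → p g → p (f + g)) (hsingle : ∀ i b, p (single i b)) : p f :=
  DFinsupp.induction f h0 fun i b _ _ _ hf => hadd _ _ (hsingle i b) hf

end DFinsupp

section Category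

variable {H : Subgroup G}

-- Typed in `ACat H B`, so that `+` and `•` around it are those of `ACat H B`, not of `Π₀`.
noncomputable abbrev ACat.single (i : (G ⧸ H) × (G ⧸ H)) (m : HomMod H B i.1 i.2) : ACat H B :=
  DFinsupp.single i m

omit [DistribMulAction G B] in
theorem ACat.single_zero (i : (G ⧸ H) × (G ⧸ H)) : ACat.single i (0 : HomMod H B i.1 i.2) = 0 :=
  DFinsupp.single_zero (β := fun q : (G ⧸ H) × (G ⧸ H) => HomMod H B q.1 q.2) i

omit [DistribMulAction G B] in
theorem ACat.single_add (i : (G ⧸ H) × (G ⧸ H)) (m m' : HomMod H B i.1 i.2) :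
    ACat.single i (m + m') = ACat.single i m + ACat.single i m' :=
  DFinsupp.single_add (β := fun q : (G ⧸ H) × (G ⧸ H) => HomMod H B q.1 q.2) i m m'

omit [DistribMulAction G B] in
theorem ACat.single_smul (c : ℓ) (i : (G ⧸ H) × (G ⧸ H)) (m : HomMod H B i.1 i.2) :
    ACat.single i (c • m) = c • ACat.single i m :=
  DFinsupp.single_smul (β := fun q : (G ⧸ H) × (G ⧸ H) => HomMod H B q.1 q.2) c m

omit [DistribMulAction G B] in
theorem ACat.induction_on_single {p : ACat H B → Prop} (a : ACat H B) (h0 : p 0)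
    (hadd : ∀ a a', p a → p a' → p (a + a'))
    (hsingle : ∀ (i : (G ⧸ H) × (G ⧸ H)) (g : {g : G // g • i.1 = i.2}) (b : B),
      p (ACat.single i (Finsupp.single g b))) : p a := by
  induction a using DFinsupp.induction_linear with
  | h0 => exact h0
  | hadd a a' ha ha' => exact hadd a a' ha ha'
  | hsingle i m =>
    change p (ACat.single i m)
    induction m using Finsupp.induction_linear with
    | zero => rw [ACat.single_zero]; exact h0
    | add m m' hm hm' => rw [ACat.single_add]; exact hadd _ _ hm hm'
    | single g b => exact hsingle i g b

section CatComp

variable {x y z : G ⧸ H}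

theorem catComp_zero_left (m : HomMod H B x y) : catComp (0 : HomMod H B y z) m = 0 := by
  simp [catComp]

theorem catComp_zero_right (m : HomMod H B y z) : catComp m (0 : HomMod H B x y) = 0 := by
  simp [catComp]

theorem catComp_add_left (m m' : HomMod H B y z) (n : HomMod H B x y) :
    catComp (m + m') n = catComp m n + catComp m' n := by
  unfold catComp
  apply Finsupp.sum_add_index' <;> intros <;>
    simp [add_mul, Finsupp.single_add, Finsupp.sum_add]

theorem catComp_add_right (m : HomMod H B y z) (n n' : HomMod H B x y) :
    catComp m (n + n') = catComp m n + catComp m n' := by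
  unfold catComp
  rw [← Finsupp.sum_add]
  refine Finsupp.sum_congr fun g _ => ?_
  apply Finsupp.sum_add_index' <;> intros <;>
    simp [mul_add, smul_add, Finsupp.single_add]

theorem catComp_single_single (g : {g : G // g • y = z}) (g' : {g : G // g • x = y}) (b b' : B) :
    catComp (Finsupp.single g b) (Finsupp.single g' b') =
      Finsupp.single ⟨g.1 * g'.1, by rw [mul_smul, g'.2]; exact g.2⟩ (b * (g.1 • b')) := by
  simp [catComp]

end CatComp

section Amul

omit [DistribMulAction G B] in
theorem HomMod.eqRec_zero {x y z : G ⧸ H} (h : y = z) :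
    (h ▸ (0 : HomMod H B x y) : HomMod H B x z) = 0 := by
  subst h; rfl

omit [DistribMulAction G B] in
theorem HomMod.eqRec_add {x y z : G ⧸ H} (h : y = z) (m m' : HomMod H B x y) :
    (h ▸ (m + m') : HomMod H B x z) = h ▸ m + h ▸ m' := by
  subst h; rfl

theorem amul_zero_left (b : ACat H B) : amul 0 b = 0 := DFinsupp.sum_zero_index

theorem amul_zero_right (a : ACat H B) : amul a 0 = 0 := by
  unfold amul
  exact (Finset.sum_congr rfl fun p _ => DFinsupp.sum_zero_index).trans DFinsupp.sum_zero

theorem amul_add_left (a a' b : ACat H B) : amul (a + a') b = amul a b + amul a' b := by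
  unfold amul
  apply DFinsupp.sum_add_index
  · intro p
    refine (Finset.sum_congr rfl fun q _ => ?_).trans DFinsupp.sum_zero
    delta ACat
    dsimp only
    split
    · rw [catComp_zero_left, DFinsupp.single_zero]; rfl
    · rfl
  · intro p m m'
    refine (Finset.sum_congr rfl fun q _ => ?_).trans DFinsupp.sum_add
    delta ACat
    dsimp only
    split
    · rw [catComp_add_left, DFinsupp.single_add]; rfl
    · exact (add_zero _).symm

theorem amul_add_right (a b b' : ACat H B) : amul a (b + b') = amul a b + amul a b' := by
  unfold amul
  refine (Finset.sum_congr rfl fun p _ => ?_).trans DFinsupp.sum_add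
  apply DFinsupp.sum_add_index
  · intro q
    delta ACat
    dsimp only
    split
    · next h => rw [HomMod.eqRec_zero h, catComp_zero_right, DFinsupp.single_zero]; rfl
    · rfl
  · intro q m m'
    delta ACat
    dsimp only
    split
    · next h => rw [HomMod.eqRec_add h, catComp_add_right, DFinsupp.single_add]; rfl
    · exact (add_zero _).symm

theorem amul_single_single (p q : (G ⧸ H) × (G ⧸ H)) (m : HomMod H B p.1 p.2)
    (m' : HomMod H B q.1 q.2) :
    amul (ACat.single p m) (ACat.single q m') =
      if h : q.2 = p.1 then ACat.single (q.1, p.2) (catComp m (h ▸ m')) else 0 := by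
  unfold amul
  rw [DFinsupp.sum_single_index, DFinsupp.sum_single_index]
  · delta ACat
    split
    · next h => rw [HomMod.eqRec_zero h, catComp_zero_right, DFinsupp.single_zero]; rfl
    · rfl
  · refine (Finset.sum_congr rfl fun q' _ => ?_).trans DFinsupp.sum_zero
    delta ACat
    dsimp only
    split
    · rw [catComp_zero_left, DFinsupp.single_zero]; rfl
    · rfl

end Amul

end Category

section HcMul

variable {H : Subgroup G}

theorem hcMul_zero_left (e : ↥H →₀ B) : hcMul 0 e = 0 := Finsupp.sum_zero_index

theorem hcMul_zero_right (e : ↥H →₀ B) : hcMul e 0 = 0 := by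
  simp [hcMul]

theorem hcMul_add_left (e e' f : ↥H →₀ B) : hcMul (e + e') f = hcMul e f + hcMul e' f := by
  unfold hcMul
  apply Finsupp.sum_add_index' <;> intros <;>
    simp [add_mul, Finsupp.single_add, Finsupp.sum_add]

theorem hcMul_add_right (e f f' : ↥H →₀ B) : hcMul e (f + f') = hcMul e f + hcMul e f' := by
  unfold hcMul
  rw [← Finsupp.sum_add]
  refine Finsupp.sum_congr fun h _ => ?_
  apply Finsupp.sum_add_index' <;> intros <;>
    simp [mul_add, smul_add, Finsupp.single_add]

theorem hcMul_single_single (h h' : ↥H) (b b' : B) :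
    hcMul (Finsupp.single h b) (Finsupp.single h' b') =
      Finsupp.single (h * h') (b * ((h : G) • b')) := by
  simp [hcMul]

end HcMul

section MatMulGen

variable {S R : Type} [AddCommMonoid R] (mulR : R → R → R)

theorem matMulGen_zero_left (b : S × S →₀ R) : matMulGen mulR 0 b = 0 :=
  Finsupp.sum_zero_index

theorem matMulGen_zero_right (a : S × S →₀ R) : matMulGen mulR a 0 = 0 := by
  simp [matMulGen]

theorem matMulGen_add_left (hz : ∀ y, mulR 0 y = 0)
    (hadd : ∀ x x' y, mulR (x + x') y = mulR x y + mulR x' y) (a a' b : S × S →₀ R) :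
    matMulGen mulR (a + a') b = matMulGen mulR a b + matMulGen mulR a' b := by
  unfold matMulGen
  apply Finsupp.sum_add_index'
  · intro p
    simp [hz]
  · intro p x x'
    rw [← Finsupp.sum_add]
    refine Finsupp.sum_congr fun q _ => ?_
    split
    · rw [hadd, Finsupp.single_add]
    · rw [add_zero]

theorem matMulGen_add_right (hz : ∀ x, mulR x 0 = 0)
    (hadd : ∀ x y y', mulR x (y + y') = mulR x y + mulR x y') (a b b' : S × S →₀ R) :
    matMulGen mulR a (b + b') = matMulGen mulR a b + matMulGen mulR a b' := by
  unfold matMulGen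
  rw [← Finsupp.sum_add]
  refine Finsupp.sum_congr fun p _ => ?_
  apply Finsupp.sum_add_index'
  · intro q
    simp [hz]
  · intro q y y'
    split
    · rw [hadd, Finsupp.single_add]
    · rw [add_zero]

theorem matMulGen_single_single (hz₁ : ∀ y, mulR 0 y = 0) (hz₂ : ∀ x, mulR x 0 = 0)
    (p q : S × S) (x y : R) :
    matMulGen mulR (Finsupp.single p x) (Finsupp.single q y) =
      if p.2 = q.1 then Finsupp.single (p.1, q.2) (mulR x y) else 0 := by
  simp [matMulGen, hz₁, hz₂]

end MatMulGen

section Alpha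

variable {H : Subgroup G} (s : G ⧸ H → G) (hs : ∀ x, QuotientGroup.mk (s x) = x)

theorem alphaMap_zero : alphaMap (B := B) s hs 0 = 0 := DFinsupp.sum_zero_index

theorem alphaMap_add (a a' : ACat H B) :
    alphaMap s hs (a + a') = alphaMap s hs a + alphaMap s hs a' := by
  unfold alphaMap
  apply DFinsupp.sum_add_index
  · intro p; exact Finsupp.sum_zero_index
  · intro p m m'
    apply Finsupp.sum_add_index' <;> intros <;> simp [smul_add, Finsupp.single_add]

theorem alphaMap_single (p : (G ⧸ H) × (G ⧸ H)) (m : HomMod H B p.1 p.2) :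
    alphaMap s hs (ACat.single p m) = m.sum fun g b =>
      Finsupp.single (p.2, p.1)
        (Finsupp.single ⟨(s p.2)⁻¹ * g.1 * s p.1, section_mem s hs g⟩ ((s p.2)⁻¹ • b)) :=
  DFinsupp.sum_single_index Finsupp.sum_zero_index

theorem alphaMap_single_single (p : (G ⧸ H) × (G ⧸ H)) (g : {g : G // g • p.1 = p.2}) (b : B) :
    alphaMap s hs (ACat.single p (Finsupp.single g b)) =
      Finsupp.single (p.2, p.1)
        (Finsupp.single ⟨(s p.2)⁻¹ * g.1 * s p.1, section_mem s hs g⟩ ((s p.2)⁻¹ • b)) := by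
  simp [alphaMap_single]

theorem alphaMap_smul (hact : ∀ (g : G) (c : ℓ) (b : B), g • (c • b) = c • (g • b)) (c : ℓ)
    (a : ACat H B) :
    alphaMap s hs (c • a) = c • alphaMap s hs a := by
  induction a using ACat.induction_on_single with
  | h0 => rw [smul_zero, alphaMap_zero, smul_zero]
  | hadd a a' ha ha' => rw [smul_add, alphaMap_add, alphaMap_add, ha, ha', smul_add]
  | hsingle p g b =>
    rw [← ACat.single_smul, Finsupp.smul_single, alphaMap_single_single, alphaMap_single_single,
      hact, Finsupp.smul_single, Finsupp.smul_single]

end Alpha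

section Beta

variable {H : Subgroup G}

theorem section_mul_mul_inv_smul (s : G ⧸ H → G) (hs : ∀ x, QuotientGroup.mk (s x) = x)
    {x y : G ⧸ H} (h : ↥H) : (s y * h * (s x)⁻¹) • x = y :=
  calc (s y * h * (s x)⁻¹) • x
      = (s y * h * (s x)⁻¹) • (QuotientGroup.mk (s x) : G ⧸ H) := by rw [hs]
    _ = QuotientGroup.mk (s y * h * (s x)⁻¹ * s x) := rfl
    _ = y := by rw [inv_mul_cancel_right, QuotientGroup.mk_mul_of_mem _ h.2, hs]

variable (s : G ⧸ H → G) (hs : ∀ x, QuotientGroup.mk (s x) = x)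

noncomputable def betaMap (M : (G ⧸ H) × (G ⧸ H) →₀ (↥H →₀ B)) : ACat H B :=
  M.sum fun p e => e.sum fun h b =>
    ACat.single (p.2, p.1)
      (Finsupp.single ⟨s p.1 * h * (s p.2)⁻¹, section_mul_mul_inv_smul s hs h⟩ (s p.1 • b))

theorem betaMap_zero : betaMap (B := B) s hs 0 = 0 := Finsupp.sum_zero_index

theorem betaMap_add (M N : (G ⧸ H) × (G ⧸ H) →₀ (↥H →₀ B)) :
    betaMap s hs (M + N) = betaMap s hs M + betaMap s hs N := by
  unfold betaMap
  apply Finsupp.sum_add_index' <;> intros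
  · exact Finsupp.sum_zero_index
  · apply Finsupp.sum_add_index' <;> intros <;>
      simp only [smul_zero, smul_add, Finsupp.single_zero, Finsupp.single_add, ACat.single_zero,
        ACat.single_add]

theorem betaMap_single_single (p : (G ⧸ H) × (G ⧸ H)) (h : ↥H) (b : B) :
    betaMap s hs (Finsupp.single p (Finsupp.single h b)) =
      ACat.single (p.2, p.1)
        (Finsupp.single ⟨s p.1 * h * (s p.2)⁻¹, section_mul_mul_inv_smul s hs h⟩ (s p.1 • b)) := by
  unfold betaMap
  rw [Finsupp.sum_single_index, Finsupp.sum_single_index]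
  · rw [smul_zero, Finsupp.single_zero, ACat.single_zero]
  · exact Finsupp.sum_zero_index

theorem betaMap_alphaMap (a : ACat H B) : betaMap s hs (alphaMap s hs a) = a := by
  induction a using ACat.induction_on_single with
  | h0 => rw [alphaMap_zero, betaMap_zero]
  | hadd a a' ha ha' => rw [alphaMap_add, betaMap_add, ha, ha']
  | hsingle p g b =>
    rw [alphaMap_single_single, betaMap_single_single]
    congr 2
    · exact Subtype.ext (by simp only; group)
    · exact smul_inv_smul _ _

theorem alphaMap_betaMap (M : (G ⧸ H) × (G ⧸ H) →₀ (↥H →₀ B)) :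
    alphaMap s hs (betaMap s hs M) = M := by
  induction M using Finsupp.induction_linear with
  | zero => rw [betaMap_zero, alphaMap_zero]
  | add M N hM hN => rw [betaMap_add, alphaMap_add, hM, hN]
  | single p e =>
    induction e using Finsupp.induction_linear with
    | zero => rw [Finsupp.single_zero, betaMap_zero, alphaMap_zero]
    | add e e' he he' => rw [Finsupp.single_add, betaMap_add, alphaMap_add, he, he']
    | single h b =>
      rw [betaMap_single_single, alphaMap_single_single]
      congr 2
      · exact Subtype.ext (by simp only; group)
      · exact inv_smul_smul _ _

theorem alphaMap_bijective : Function.Bijective (alphaMap (B := B) s hs) :=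
  Function.bijective_iff_has_inverse.mpr
    ⟨betaMap s hs, betaMap_alphaMap s hs, alphaMap_betaMap s hs⟩

end Beta

section Mul

variable {H : Subgroup G} (s : G ⧸ H → G) (hs : ∀ x, QuotientGroup.mk (s x) = x)

theorem alphaMap_amul_single_single (hsm : ∀ (g : G) (a b : B), g • (a * b) = (g • a) * (g • b))
    (p q : (G ⧸ H) × (G ⧸ H)) (g : {g : G // g • p.1 = p.2}) (g' : {g : G // g • q.1 = q.2})
    (b b' : B) :
    alphaMap s hs
        (amul (ACat.single p (Finsupp.single g b)) (ACat.single q (Finsupp.single g' b'))) =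
      matMulGen hcMul (alphaMap s hs (ACat.single p (Finsupp.single g b)))
        (alphaMap s hs (ACat.single q (Finsupp.single g' b'))) := by
  obtain ⟨p1, p2⟩ := p
  obtain ⟨q1, q2⟩ := q
  rw [alphaMap_single_single, alphaMap_single_single,
    matMulGen_single_single hcMul hcMul_zero_left hcMul_zero_right, amul_single_single]
  by_cases hqp : q2 = p1
  · subst hqp
    rw [dif_pos rfl, if_pos rfl, catComp_single_single, alphaMap_single_single, hcMul_single_single]
    congr 2
    · exact Subtype.ext (by simp only [Subgroup.coe_mul]; group)
    · -- `((s p2)⁻¹ * g * s q2) • (s q2)⁻¹ • b' = ((s p2)⁻¹ * g) • b'`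
      simp only [hsm, ← mul_smul]
      congr 2
      group
  · rw [dif_neg hqp, if_neg (Ne.symm hqp)]
    exact alphaMap_zero s hs

theorem alphaMap_amul (hsm : ∀ (g : G) (a b : B), g • (a * b) = (g • a) * (g • b))
    (a b : ACat H B) :
    alphaMap s hs (amul a b) = matMulGen hcMul (alphaMap s hs a) (alphaMap s hs b) := by
  induction a using ACat.induction_on_single with
  | h0 => rw [amul_zero_left, alphaMap_zero, matMulGen_zero_left]
  | hadd a a' ha ha' =>
    rw [amul_add_left, alphaMap_add, alphaMap_add, ha, ha',
      matMulGen_add_left hcMul hcMul_zero_left hcMul_add_left]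
  | hsingle p g x =>
    induction b using ACat.induction_on_single with
    | h0 => rw [amul_zero_right, alphaMap_zero, matMulGen_zero_right]
    | hadd b b' hb hb' =>
      rw [amul_add_right, alphaMap_add, alphaMap_add, hb, hb',
        matMulGen_add_right hcMul hcMul_zero_right hcMul_add_right]
    | hsingle q g' y => exact alphaMap_amul_single_single s hs hsm p q g g' x y

end Mul

theorem stmt9_general {H : Subgroup G} (s : G ⧸ H → G)
    (hs : ∀ x, QuotientGroup.mk (s x) = x)
    (hsm : ∀ (g : G) (a b : B), g • (a * b) = (g • a) * (g • b))
    (hact : ∀ (g : G) (c : ℓ) (b : B), g • (c • b) = c • (g • b)) :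
    Function.Bijective (alphaMap (B := B) s hs) ∧
    (∀ a b : ACat H B, alphaMap s hs (a + b) = alphaMap s hs a + alphaMap s hs b) ∧
    (∀ (c : ℓ) (a : ACat H B), alphaMap s hs (c • a) = c • alphaMap s hs a) ∧
    (∀ a b : ACat H B,
      alphaMap s hs (amul a b) =
        matMulGen hcMul (alphaMap s hs a) (alphaMap s hs b)) :=
  ⟨alphaMap_bijective s hs, alphaMap_add s hs, alphaMap_smul s hs hact, alphaMap_amul s hs hsm⟩

/-- `α` is an isomorphism of `ℓ`-algebras. -/
theorem stmt9 {H : Subgroup G} (s : G ⧸ H → G)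
    (hs : ∀ x, QuotientGroup.mk (s x) = x)
    (hs1 : s (QuotientGroup.mk 1) = 1)
    (hsm : ∀ (g : G) (a b : B), g • (a * b) = (g • a) * (g • b))
    (hact : ∀ (g : G) (c : ℓ) (b : B), g • (c • b) = c • (g • b)) :
    Function.Bijective (alphaMap (B := B) s hs) ∧
    (∀ a b : ACat H B, alphaMap s hs (a + b) = alphaMap s hs a + alphaMap s hs b) ∧
    (∀ (c : ℓ) (a : ACat H B), alphaMap s hs (c • a) = c • alphaMap s hs a) ∧
    (∀ a b : ACat H B,
      alphaMap s hs (amul a b) =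
        matMulGen hcMul (alphaMap s hs a) (alphaMap s hs b)) :=
  stmt9_general s hs hsm hact
end

section
/- Let $G$ be a group, $H \subseteq G$ a finite subgroup of order $n$ invertible in $\ell$, and $B$ a $G$-algebra. The assignment sending $(b\otimes g)\chi_{sH} \in (B\otimes\ell[vHu^{-1}])^{(G/H)}$, a morphism from $uH$ to $vH$ in the category $(B\rtimes G/H)^{(G/H)}$, to $\sum_{p \in sHv^{-1}} e_{p,pg}\otimes(p\cdot b) \in M_G \otimes B$, defines a $G$-equivariant linear functor $\zeta_{G/H}: (B\rtimes G/H)^{(G/H)} \to M_G\otimes B$; in particular it is compatible with composition: $\zeta_{G/H}(f_2 \circ f_1) = \zeta_{G/H}(f_2)\,\zeta_{G/H}(f_1)$. -/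
/-!
Statement 10: the assignment
`(b ⊗ g) χ_{sH} ∈ Hom(uH, vH) ↦ ∑_{p ∈ sHv⁻¹} e_{p, pg} ⊗ (p·b)`
defines a `G`-equivariant linear functor
`ζ_{G/H} : (B ⋊ G/H)^{(G/H)} → M_G ⊗ B`; in particular it is compatible
with composition.

The hom-module `(B ⋊ G/H)^{(G/H)}(x,y) = B ⊗ ℓ[yHx⁻¹] ⊗ ℓ^{(G/H)}` is
modeled as `({g // g•x = y} × G/H) →₀ B`; `M_G ⊗ B` as `(G × G) →₀ B`.
The set `sHv⁻¹` is parametrized as `{s.out * h * v.out⁻¹ : h ∈ H}` via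
coset representatives.
-/

open scoped Classical

variable {ℓ G B : Type} [CommRing ℓ] [Group G]
variable [NonUnitalNonAssocSemiring B] [Module ℓ B] [DistribMulAction G B]

/-- The hom-module `(B ⋊ G/H)^{(G/H)}(x,y)`; an element
`(g, t) ↦ b` stands for `(b ⊗ g) χ_t`. -/
abbrev HomT (H : Subgroup G) (B : Type) [AddCommMonoid B] (x y : G ⧸ H) :=
  ({g : G // g • x = y} × (G ⧸ H)) →₀ B

/-- Composition in `(B ⋊ G/H)^{(G/H)}`:
`((b⊗g)χ_t) ∘ ((b'⊗g')χ_{t'}) = δ_{t,t'} (b (g·b') ⊗ g g') χ_t`. -/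
noncomputable def compT {H : Subgroup G} {x y z : G ⧸ H}
    (m2 : HomT H B y z) (m1 : HomT H B x y) : HomT H B x z :=
  m2.sum fun gt b => m1.sum fun gt' b' =>
    if gt.2 = gt'.2 then
      Finsupp.single
        (⟨gt.1.1 * gt'.1.1, by rw [mul_smul, gt'.1.2]; exact gt.1.2⟩, gt.2)
        (b * (gt.1.1 • b'))
    else 0

/-- `ζ_{G/H}` on the hom-module `Hom(x, y)`:
`(b ⊗ g) χ_t ↦ ∑_{p ∈ tHy⁻¹} e_{p, pg} ⊗ (p·b)`. -/
noncomputable def zeta {H : Subgroup G} [Fintype H] {x y : G ⧸ H}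
    (m : HomT H B x y) : (G × G) →₀ B :=
  m.sum fun gt b => ∑ h : H,
    Finsupp.single
      (gt.2.out * (h : G) * y.out⁻¹, gt.2.out * (h : G) * y.out⁻¹ * gt.1.1)
      ((gt.2.out * (h : G) * y.out⁻¹) • b)

/-- The multiplication of `M_G ⊗ B` (finitely supported `G × G` matrices). -/
noncomputable def mgbMul (a b : (G × G) →₀ B) : (G × G) →₀ B :=
  a.sum fun p x => b.sum fun q y =>
    if p.2 = q.1 then Finsupp.single (p.1, q.2) (x * y) else 0

/-- The `G`-action on the hom-modules of `(B ⋊ G/H)^{(G/H)}` (translation on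
the `ℓ^{(G/H)}` factor). -/
noncomputable def domAct {H : Subgroup G} {x y : G ⧸ H} (g₀ : G)
    (m : HomT H B x y) : HomT H B x y :=
  m.sum fun gt b => Finsupp.single (gt.1, g₀ • gt.2) b

/-- The `G`-action on `M_G ⊗ B`: `g₀ • (e_{p,q} ⊗ b) = e_{g₀p, g₀q} ⊗ g₀·b`. -/
noncomputable def codAct (g₀ : G) (e : (G × G) →₀ B) : (G × G) →₀ B :=
  e.sum fun p b => Finsupp.single (g₀ * p.1, g₀ * p.2) (g₀ • b)

/-!
Both sides of each identity are additive in every argument, so it suffices to check them on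
elementary tensors `(b ⊗ g) χ_t`. There everything reduces to coset bookkeeping: writing
`z.out = g * y.out * k` with `k ∈ H`, the matrix units `e_{p, pg}` of `ζ(b₂ ⊗ g)χ_t` and
`e_{q, q g'}` of `ζ(b₁ ⊗ g')χ_{t'}` with `p = t.out * h * z.out⁻¹`, `q = t'.out * h' * y.out⁻¹`
compose to a nonzero matrix unit exactly when `t = t'` and `h' = h * k⁻¹`, because
`(t, h) ↦ t.out * h` is injective.
-/

section MatrixAlgebra

variable {α R : Type} [NonUnitalNonAssocSemiring R]

lemma mgbMul_single_single (p q : α × α) (c d : R) :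
    mgbMul (Finsupp.single p c) (Finsupp.single q d) =
      if p.2 = q.1 then Finsupp.single (p.1, q.2) (c * d) else 0 := by
  unfold mgbMul
  rw [Finsupp.sum_single_index (by simp), Finsupp.sum_single_index (by simp)]

lemma mgbMul_zero_left (e : (α × α) →₀ R) : mgbMul 0 e = 0 :=
  Finsupp.sum_zero_index

lemma mgbMul_zero_right (e : (α × α) →₀ R) : mgbMul e 0 = 0 := by
  simp [mgbMul]

lemma mgbMul_add_left (a a' e : (α × α) →₀ R) :
    mgbMul (a + a') e = mgbMul a e + mgbMul a' e :=
  Finsupp.sum_add_index' (fun _ => by simp) fun _ _ _ => by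
    rw [← Finsupp.sum_add]
    exact Finsupp.sum_congr fun _ _ => by
      split_ifs <;> simp [add_mul, Finsupp.single_add]

lemma mgbMul_add_right (e a a' : (α × α) →₀ R) :
    mgbMul e (a + a') = mgbMul e a + mgbMul e a' := by
  unfold mgbMul
  rw [← Finsupp.sum_add]
  refine Finsupp.sum_congr fun _ _ => Finsupp.sum_add_index' (fun _ => by simp) fun _ _ _ => ?_
  split_ifs <;> simp [mul_add, Finsupp.single_add]

lemma mgbMul_sum_left {ι : Type*} (s : Finset ι) (f : ι → (α × α) →₀ R) (e : (α × α) →₀ R) :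
    mgbMul (∑ i ∈ s, f i) e = ∑ i ∈ s, mgbMul (f i) e :=
  map_sum (⟨⟨(mgbMul · e), mgbMul_zero_left e⟩, (mgbMul_add_left · · e)⟩ :
    ((α × α) →₀ R) →+ ((α × α) →₀ R)) f s

lemma mgbMul_sum_right {ι : Type*} (e : (α × α) →₀ R) (s : Finset ι) (f : ι → (α × α) →₀ R) :
    mgbMul e (∑ i ∈ s, f i) = ∑ i ∈ s, mgbMul e (f i) :=
  map_sum (⟨⟨mgbMul e, mgbMul_zero_right e⟩, mgbMul_add_right e⟩ :
    ((α × α) →₀ R) →+ ((α × α) →₀ R)) f s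

end MatrixAlgebra

section Cosets

variable {H : Subgroup G}

lemma exists_out_eq_mul_of_smul_eq {g : G} {y z : G ⧸ H} (hg : g • y = z) :
    ∃ k : H, z.out = g * y.out * k := by
  obtain ⟨k, hk⟩ := QuotientGroup.mk_out_eq_mul H (g * y.out)
  refine ⟨k, ?_⟩
  rw [← hk, ← hg, ← smul_eq_mul, ← MulAction.Quotient.smul_mk, QuotientGroup.out_eq']

lemma out_mul_eq_out_mul_iff {t t' : G ⧸ H} {h h' : H} :
    t.out * h = t'.out * h' ↔ t = t' ∧ h = h' := by
  refine ⟨fun heq => ?_, fun ⟨ht, hh⟩ => by rw [ht, hh]⟩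
  have ht : t = t' := by
    rw [← QuotientGroup.out_eq' t, ← QuotientGroup.out_eq' t',
      ← QuotientGroup.mk_mul_of_mem t.out h.2, heq, QuotientGroup.mk_mul_of_mem t'.out h'.2]
  subst ht
  exact ⟨rfl, Subtype.ext (mul_left_cancel heq)⟩

end Cosets

section Composition

variable {H : Subgroup G}

lemma compT_single_single {x y z : G ⧸ H} (a₂ : {g : G // g • y = z} × (G ⧸ H)) (b₂ : B)
    (a₁ : {g : G // g • x = y} × (G ⧸ H)) (b₁ : B) :
    compT (Finsupp.single a₂ b₂) (Finsupp.single a₁ b₁) =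
      if a₂.2 = a₁.2 then
        Finsupp.single (⟨a₂.1.1 * a₁.1.1, by rw [mul_smul, a₁.1.2]; exact a₂.1.2⟩, a₂.2)
          (b₂ * (a₂.1.1 • b₁))
      else 0 := by
  unfold compT
  rw [Finsupp.sum_single_index (by simp), Finsupp.sum_single_index (by simp)]

lemma compT_zero_left {x y z : G ⧸ H} (m₁ : HomT H B x y) : compT (0 : HomT H B y z) m₁ = 0 :=
  Finsupp.sum_zero_index

lemma compT_zero_right {x y z : G ⧸ H} (m₂ : HomT H B y z) : compT m₂ (0 : HomT H B x y) = 0 := by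
  simp [compT]

lemma compT_add_left {x y z : G ⧸ H} (m m' : HomT H B y z) (m₁ : HomT H B x y) :
    compT (m + m') m₁ = compT m m₁ + compT m' m₁ :=
  Finsupp.sum_add_index' (fun _ => by simp) fun _ _ _ => by
    rw [← Finsupp.sum_add]
    exact Finsupp.sum_congr fun _ _ => by split_ifs <;> simp [add_mul, Finsupp.single_add]

lemma compT_add_right {x y z : G ⧸ H} (m₂ : HomT H B y z) (m m' : HomT H B x y) :
    compT m₂ (m + m') = compT m₂ m + compT m₂ m' := by
  unfold compT
  rw [← Finsupp.sum_add]
  refine Finsupp.sum_congr fun _ _ => Finsupp.sum_add_index' (fun _ => by simp) fun _ _ _ => ?_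
  split_ifs <;> simp [smul_add, mul_add, Finsupp.single_add]

end Composition

section Translation

variable {K R : Type} [Group K] [NonUnitalNonAssocSemiring R] {H : Subgroup K}

lemma domAct_single {x y : K ⧸ H} (g₀ : K) (a : {g : K // g • x = y} × (K ⧸ H)) (b : R) :
    domAct g₀ (Finsupp.single a b) = Finsupp.single (a.1, g₀ • a.2) b :=
  Finsupp.sum_single_index (by simp)

lemma domAct_zero {x y : K ⧸ H} (g₀ : K) : domAct g₀ (0 : HomT H R x y) = 0 :=
  Finsupp.sum_zero_index

lemma domAct_add {x y : K ⧸ H} (g₀ : K) (m m' : HomT H R x y) :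
    domAct g₀ (m + m') = domAct g₀ m + domAct g₀ m' :=
  Finsupp.sum_add_index' (fun _ => by simp) fun _ _ _ => by simp [Finsupp.single_add]

end Translation

lemma codAct_single (g₀ : G) (p : G × G) (b : B) :
    codAct g₀ (Finsupp.single p b) = Finsupp.single (g₀ * p.1, g₀ * p.2) (g₀ • b) :=
  Finsupp.sum_single_index (by simp)

lemma codAct_zero (g₀ : G) : codAct g₀ (0 : (G × G) →₀ B) = 0 :=
  Finsupp.sum_zero_index

lemma codAct_add (g₀ : G) (e e' : (G × G) →₀ B) :
    codAct g₀ (e + e') = codAct g₀ e + codAct g₀ e' :=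
  Finsupp.sum_add_index' (fun _ => by simp) fun _ _ _ => by simp [smul_add, Finsupp.single_add]

lemma codAct_sum {ι : Type*} (g₀ : G) (s : Finset ι) (f : ι → (G × G) →₀ B) :
    codAct g₀ (∑ i ∈ s, f i) = ∑ i ∈ s, codAct g₀ (f i) :=
  map_sum (⟨⟨codAct g₀, codAct_zero g₀⟩, codAct_add g₀⟩ : ((G × G) →₀ B) →+ ((G × G) →₀ B)) f s

section Zeta

variable {H : Subgroup G} [Fintype H]

lemma zeta_single {x y : G ⧸ H} (a : {g : G // g • x = y} × (G ⧸ H)) (b : B) :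
    zeta (Finsupp.single a b) = ∑ h : H,
      Finsupp.single (a.2.out * h * y.out⁻¹, a.2.out * h * y.out⁻¹ * a.1.1)
        ((a.2.out * h * y.out⁻¹) • b) :=
  Finsupp.sum_single_index (by simp)

lemma zeta_zero {x y : G ⧸ H} : zeta (0 : HomT H B x y) = 0 :=
  Finsupp.sum_zero_index

lemma zeta_add {x y : G ⧸ H} (m m' : HomT H B x y) : zeta (m + m') = zeta m + zeta m' :=
  Finsupp.sum_add_index' (by simp) fun _ _ _ => by
    simp [smul_add, Finsupp.single_add, Finset.sum_add_distrib]

lemma zeta_smul {x y : G ⧸ H} (hact : ∀ (g : G) (c : ℓ) (b : B), g • (c • b) = c • (g • b))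
    (c : ℓ) (m : HomT H B x y) : zeta (c • m) = c • zeta m := by
  unfold zeta
  rw [Finsupp.sum_smul_index' (fun _ => by simp), Finsupp.smul_sum]
  refine Finsupp.sum_congr fun _ _ => ?_
  rw [Finset.smul_sum]
  simp only [hact, Finsupp.smul_single]

lemma zeta_compT_single_single {x y z : G ⧸ H}
    (hsm : ∀ (g : G) (a b : B), g • (a * b) = (g • a) * (g • b))
    (a₂ : {g : G // g • y = z} × (G ⧸ H)) (b₂ : B) (a₁ : {g : G // g • x = y} × (G ⧸ H)) (b₁ : B) :
    zeta (compT (Finsupp.single a₂ b₂) (Finsupp.single a₁ b₁)) =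
      mgbMul (zeta (Finsupp.single a₂ b₂)) (zeta (Finsupp.single a₁ b₁)) := by
  obtain ⟨⟨g, hg⟩, t⟩ := a₂
  obtain ⟨⟨g', _⟩, t'⟩ := a₁
  obtain ⟨k, hk⟩ := exists_out_eq_mul_of_smul_eq hg
  have hshift : ∀ h : H, t.out * h * z.out⁻¹ * g = t.out * ↑(h * k⁻¹) * y.out⁻¹ := by
    intro h
    rw [hk]
    push_cast
    group
  have hmatch : ∀ h h' : H, t.out * h * z.out⁻¹ * g = t'.out * h' * y.out⁻¹ ↔
      t = t' ∧ h * k⁻¹ = h' := by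
    intro h h'
    rw [hshift, mul_left_inj, out_mul_eq_out_mul_iff]
  rw [compT_single_single, zeta_single, zeta_single, mgbMul_sum_left]
  simp only [mgbMul_sum_right, mgbMul_single_single, hmatch]
  by_cases ht : t = t'
  · subst ht
    simp only [true_and, if_true, zeta_single, Finset.sum_ite_eq, Finset.mem_univ, ← hshift]
    refine Finset.sum_congr rfl fun h _ => ?_
    rw [hsm, ← mul_assoc, mul_smul _ g b₁]
  · simp [ht, zeta_zero]

lemma zeta_domAct_single {x y : G ⧸ H} (g₀ : G) (a : {g : G // g • x = y} × (G ⧸ H)) (b : B) :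
    zeta (domAct g₀ (Finsupp.single a b)) = codAct g₀ (zeta (Finsupp.single a b)) := by
  obtain ⟨k, hk⟩ := exists_out_eq_mul_of_smul_eq (rfl : g₀ • a.2 = g₀ • a.2)
  rw [domAct_single, zeta_single, zeta_single, codAct_sum]
  simp only [codAct_single]
  refine Fintype.sum_equiv (Equiv.mulLeft k) _ _ fun h => ?_
  have hrep : (g₀ • a.2).out * h * y.out⁻¹ = g₀ * (a.2.out * ↑(k * h) * y.out⁻¹) := by
    rw [hk]
    push_cast
    group
  simp only [Equiv.coe_mulLeft, hrep, mul_smul g₀, mul_assoc]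

lemma zeta_compT (hsm : ∀ (g : G) (a b : B), g • (a * b) = (g • a) * (g • b)) {x y z : G ⧸ H}
    (m₂ : HomT H B y z) (m₁ : HomT H B x y) :
    zeta (compT m₂ m₁) = mgbMul (zeta m₂) (zeta m₁) := by
  induction m₂ using Finsupp.induction_linear with
  | zero => rw [compT_zero_left, zeta_zero, zeta_zero, mgbMul_zero_left]
  | add f g hf hg => rw [compT_add_left, zeta_add, hf, hg, zeta_add, mgbMul_add_left]
  | single a₂ b₂ =>
    induction m₁ using Finsupp.induction_linear with
    | zero => rw [compT_zero_right, zeta_zero, zeta_zero, mgbMul_zero_right]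
    | add f g hf hg => rw [compT_add_right, zeta_add, hf, hg, zeta_add, mgbMul_add_right]
    | single a₁ b₁ => exact zeta_compT_single_single hsm a₂ b₂ a₁ b₁

lemma zeta_domAct {x y : G ⧸ H} (g₀ : G) (m : HomT H B x y) :
    zeta (domAct g₀ m) = codAct g₀ (zeta m) := by
  induction m using Finsupp.induction_linear with
  | zero => rw [domAct_zero, zeta_zero, codAct_zero]
  | add f g hf hg => rw [domAct_add, zeta_add, hf, hg, zeta_add, codAct_add]
  | single a b => exact zeta_domAct_single g₀ a b

end Zeta

theorem stmt10_general (H : Subgroup G) [Fintype H]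
    (hsm : ∀ (g : G) (a b : B), g • (a * b) = (g • a) * (g • b))
    (hact : ∀ (g : G) (c : ℓ) (b : B), g • (c • b) = c • (g • b)) :
    (∀ {x y z : G ⧸ H} (m2 : HomT H B y z) (m1 : HomT H B x y),
      zeta (compT m2 m1) = mgbMul (zeta m2) (zeta m1)) ∧
    (∀ {x y : G ⧸ H} (g₀ : G) (m : HomT H B x y),
      zeta (domAct g₀ m) = codAct g₀ (zeta m)) ∧
    (∀ {x y : G ⧸ H} (m m' : HomT H B x y),
      zeta (m + m') = zeta m + zeta m') ∧
    (∀ {x y : G ⧸ H} (c : ℓ) (m : HomT H B x y),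
      zeta (c • m) = c • zeta m) :=
  ⟨zeta_compT hsm, zeta_domAct, zeta_add, zeta_smul hact⟩

/-- `ζ_{G/H}` is a `G`-equivariant linear functor
`(B ⋊ G/H)^{(G/H)} → M_G ⊗ B`: it is additive, `ℓ`-linear, `G`-equivariant
and compatible with composition. -/
theorem stmt10 (H : Subgroup G) [Fintype H]
    (v : ℓ) (hv : (Fintype.card H : ℓ) * v = 1)
    (hsm : ∀ (g : G) (a b : B), g • (a * b) = (g • a) * (g • b))
    (hact : ∀ (g : G) (c : ℓ) (b : B), g • (c • b) = c • (g • b)) :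
    (∀ {x y z : G ⧸ H} (m2 : HomT H B y z) (m1 : HomT H B x y),
      zeta (compT m2 m1) = mgbMul (zeta m2) (zeta m1)) ∧
    (∀ {x y : G ⧸ H} (g₀ : G) (m : HomT H B x y),
      zeta (domAct g₀ m) = codAct g₀ (zeta m)) ∧
    (∀ {x y : G ⧸ H} (m m' : HomT H B x y),
      zeta (m + m') = zeta m + zeta m') ∧
    (∀ {x y : G ⧸ H} (c : ℓ) (m : HomT H B x y),
      zeta (c • m) = c • zeta m) :=
  stmt10_general H hsm hact
end

section
/- With notation as above, for any morphism $f: G/H \to G/K$ of $G$-sets with $H, K$ finite subgroups (determined by $f(H) = xK$ with $H \subseteq xKx^{-1}$), the square relating $\zeta_{G/H}$ and $\zeta_{G/K}$ commutes: for every generator $(b\otimes g)\chi_{sK}$ in $(B\rtimes G/H)^{(G/K)}$ one has $\zeta_{G/K}(f_*((b\otimes g)\chi_{sK})) = \zeta_{G/H}(f^*((b\otimes g)\chi_{sK}))$ in $M_G\otimes B$, where $f_*$ pushes forward the category variable and $f^* ((b\otimes g)\chi_{sK}) = \sum_{tH \in f^{-1}(sK)}(b\otimes g)\chi_{tH}$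 pulls back the coefficient variable. -/
/-!
Statement 11: compatibility of the functors `ζ_{G/H}` and `ζ_{G/K}` with a
morphism `f : G/H → G/K` of `G`-sets: for every generator `(b ⊗ g) χ_{sK}`
one has `ζ_{G/K}(f_*((b⊗g)χ_{sK})) = ζ_{G/H}(f^*((b⊗g)χ_{sK}))` in `M_G ⊗ B`.

`ζ_{G/H}` sends the generator `(b⊗g)χ_{sH} ∈ Hom(uH, vH)` to
`∑_{p ∈ sHv⁻¹} e_{p, pg} ⊗ (p·b)`; the set `sHv⁻¹` is parametrized as
`{s.out * h * v.out⁻¹ : h ∈ H}` using coset representatives, and `f^*` pulls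
back along the (finite) fibers of `f`.  `M_G ⊗ B` is modeled as
`(G × G) →₀ B`.
-/

/-- For a `G`-equivariant `f : G/H → G/K` (with finite
fibers recorded by `fib`), the two images in `M_G ⊗ B` of a generator
`(b ⊗ g) χ_{sK}` of `(B ⋊ G/H)^{(G/K)}(uH, vH)` under `ζ_{G/K} ∘ f_*` and
`ζ_{G/H} ∘ f^*` agree. -/
theorem stmt11 {ℓ G B : Type} [CommRing ℓ] [Group G]
    [NonUnitalNonAssocSemiring B] [Module ℓ B] [DistribMulAction G B]
    (hsm : ∀ (g : G) (a b : B), g • (a * b) = (g • a) * (g • b))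
    (H K : Subgroup G) [Fintype H] [Fintype K]
    (vH vK : ℓ) (hvH : (Fintype.card H : ℓ) * vH = 1)
    (hvK : (Fintype.card K : ℓ) * vK = 1)
    (f : G ⧸ H → G ⧸ K) (hf : ∀ (g : G) (q : G ⧸ H), f (g • q) = g • f q)
    (fib : G ⧸ K → Finset (G ⧸ H))
    (hfib : ∀ (sK : G ⧸ K) (tH : G ⧸ H), tH ∈ fib sK ↔ f tH = sK)
    (b : B) (g : G) (u v : G ⧸ H) (hg : g • u = v) (s : G ⧸ K) :
    (∑ k : K, Finsupp.single
        ((s.out * (k : G) * (f v).out⁻¹ : G),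
          (s.out * (k : G) * (f v).out⁻¹ * g : G))
        ((s.out * (k : G) * (f v).out⁻¹ : G) • b)) =
    ∑ t ∈ fib s, ∑ h : H, Finsupp.single
        ((t.out * (h : G) * v.out⁻¹ : G), (t.out * (h : G) * v.out⁻¹ * g : G))
        ((t.out * (h : G) * v.out⁻¹ : G) • b) := by
  -- key computation: value of `f` on any coset in terms of representatives
  have hkey : ∀ q : G, f (QuotientGroup.mk q) =
      QuotientGroup.mk (q * v.out⁻¹ * (f v).out) := by
    intro q
    have h1 : (QuotientGroup.mk q : G ⧸ H) = (q * v.out⁻¹) • v := by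
      rw [← MulAction.Quotient.mk_smul_out, smul_eq_mul, inv_mul_cancel_right]
    rw [h1, hf, ← MulAction.Quotient.mk_smul_out, smul_eq_mul]
  -- writing `t.out * h` instead of `t` leaves the coset unchanged
  have hmk : ∀ (t : G ⧸ H) (h : H),
      (QuotientGroup.mk (t.out * (h : G)) : G ⧸ H) = t := by
    intro t h
    rw [← QuotientGroup.out_eq' t]
    exact (QuotientGroup.eq.mpr (by simpa using h.2)).symm
  rw [← Finset.sum_product']
  refine Finset.sum_bij'
    (i := fun (k : K) _ =>
      ((QuotientGroup.mk (s.out * (k : G) * (f v).out⁻¹ * v.out) : G ⧸ H),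
       (⟨(QuotientGroup.mk (s.out * (k : G) * (f v).out⁻¹ * v.out) : G ⧸ H).out⁻¹ *
          (s.out * (k : G) * (f v).out⁻¹ * v.out),
        QuotientGroup.eq.mp (QuotientGroup.out_eq' _)⟩ : H)))
    (j := fun p hp =>
      (⟨s.out⁻¹ * (p.1.out * (p.2 : G) * v.out⁻¹ * (f v).out), ?_⟩ : K))
    ?_ (fun _ _ => Finset.mem_univ _) ?_ ?_ ?_
  · -- membership of the value of `j` in `K`
    have hp1 : f p.1 = s := (hfib s p.1).mp (Finset.mem_product.mp hp).1
    have h2 : f (QuotientGroup.mk (p.1.out * (p.2 : G))) = s := by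
      rw [hmk p.1 p.2, hp1]
    rw [hkey] at h2
    have h3 : (QuotientGroup.mk s.out : G ⧸ K) =
        QuotientGroup.mk (p.1.out * (p.2 : G) * v.out⁻¹ * (f v).out) := by
      rw [h2, QuotientGroup.out_eq']
    exact QuotientGroup.eq.mp h3
  · -- `i` lands in `fib s ×ˢ univ`
    intro k _
    rw [Finset.mem_product]
    refine ⟨(hfib s _).mpr ?_, Finset.mem_univ _⟩
    rw [hkey]
    have h4 : s.out * (k : G) * (f v).out⁻¹ * v.out * v.out⁻¹ * (f v).out
        = s.out * (k : G) := by group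
    rw [h4, ← QuotientGroup.out_eq' s]
    exact (QuotientGroup.eq.mpr (by simpa using k.2)).symm
  · -- left inverse
    intro k _
    apply Subtype.ext
    show s.out⁻¹ * (_ * ((_ : G ⧸ H).out⁻¹ * (s.out * (k : G) * (f v).out⁻¹ * v.out))
        * v.out⁻¹ * (f v).out) = (k : G)
    group
  · -- right inverse
    intro p hp
    obtain ⟨t, h⟩ := p
    have hp1 : t ∈ fib s := (Finset.mem_product.mp hp).1
    have hQ : s.out * (s.out⁻¹ * (t.out * (h : G) * v.out⁻¹ * (f v).out))
        * (f v).out⁻¹ * v.out = t.out * (h : G) := by group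
    have h1 : (QuotientGroup.mk (s.out *
        (s.out⁻¹ * (t.out * (h : G) * v.out⁻¹ * (f v).out)) * (f v).out⁻¹ * v.out)
        : G ⧸ H) = t := by rw [hQ]; exact hmk t h
    refine Prod.ext h1 (Subtype.ext ?_)
    show (QuotientGroup.mk _ : G ⧸ H).out⁻¹ * _ = (h : G)
    rw [hQ, hmk t h]
    exact inv_mul_cancel_left _ _
  · -- the summands agree
    intro k _
    have h5 : (QuotientGroup.mk (s.out * (k : G) * (f v).out⁻¹ * v.out) : G ⧸ H).out *
        ((QuotientGroup.mk (s.out * (k : G) * (f v).out⁻¹ * v.out) : G ⧸ H).out⁻¹ *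
          (s.out * (k : G) * (f v).out⁻¹ * v.out)) * v.out⁻¹
        = s.out * (k : G) * (f v).out⁻¹ := by group
    rw [h5]
end

section
/- Let $G$ be a group, $H$ a finite subgroup of order $n$ invertible in $\ell$, $A$ an algebra with trivial $G$-action on its entries, and $G_+ = G \sqcup \{+\}$. For each coset $wH$, the element $V_{wH} = \sum_{x\in wH}(\frac{n-1}{n}e_{x,x} + e_{+,x} + e_{x,+}) - \sum_{x,y\in wH}\frac1n e_{x,y} + \sum_{g\in G\setminus wH} e_{g,g}$ of the algebra $\Gamma_{G_+}(\tilde A)$ of row- and column-finite $G_+\times G_+$ matrices over the unitalization $\tilde A$ is invertible, with inverse $V_{wH}^{-1} = \sum_{x\in wH}(\frac{n-1}{n}e_{x,x} + \frac1n e_{+,x} + \frac1n e_{x,+}) - \sum_{x,y\in wH}\frac1n e_{x,y} + \sum_{g\in G\setminus wH} e_{g,g}$. -/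
/-!
Statement 12: invertibility of the element `V_{wH}` in the algebra
`Γ_{G₊}(Ã)` of row- and column-finite `G₊ × G₊` matrices over the
unitalization `Ã` of `A`.

`G₊ = G ⊔ {+}` is modeled as `Option G` (with `none = +`), matrices as
functions `Option G → Option G → Unitization ℓ A`, and multiplication via
finite sums `∑ᶠ` (which are genuinely finite on row/column finite
matrices).  The entries of `V_{wH}` are scalars: on the `wH`-block the
matrix is `I - (1/n)J` with border entries `1` (resp. `1/n` for the
inverse), identity outside.
-/

open scoped BigOperators

/-- Multiplication of `ι × ι` matrices (defined via a finite sum). -/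
noncomputable def gammaMul {ι R : Type} [NonUnitalNonAssocSemiring R]
    (M N : ι → ι → R) : ι → ι → R :=
  fun x y => ∑ᶠ z, M x z * N z y

/-- The identity matrix. -/
def gammaOne {ι R : Type} [DecidableEq ι] [Zero R] [One R] : ι → ι → R :=
  fun x y => if x = y then 1 else 0

/-- The matrix `V_{wH}` (for border value `c = 1`), resp. its claimed inverse
(for border value `c = v = 1/n`): on indices in the coset `wH` the block is
`(1 - v)` on the diagonal and `-v` off the diagonal, the border row/column at
`+` has entries `c`, the corner is `0`, and outside `wH` it is the identity. -/
noncomputable def Vgen {ℓ A G : Type} [CommRing ℓ] [NonUnitalRing A]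
    [Module ℓ A] [IsScalarTower ℓ A A] [SMulCommClass ℓ A A] [Group G]
    (H : Subgroup G) [DecidableEq G] [DecidableEq (G ⧸ H)]
    (w : G ⧸ H) (v c : ℓ) : Option G → Option G → Unitization ℓ A
  | some g, some g' =>
      if QuotientGroup.mk g = w then
        (if QuotientGroup.mk g' = w then
          (if g = g' then algebraMap ℓ (Unitization ℓ A) (1 - v)
            else - algebraMap ℓ (Unitization ℓ A) v)
          else 0)
      else (if g = g' then 1 else 0)
  | some g, none => if QuotientGroup.mk g = w then algebraMap ℓ (Unitization ℓ A) c else 0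
  | none, some g' => if QuotientGroup.mk g' = w then algebraMap ℓ (Unitization ℓ A) c else 0
  | none, none => 0

section Aux

variable {ℓ A G : Type} [CommRing ℓ] [NonUnitalRing A] [Module ℓ A]
    [IsScalarTower ℓ A A] [SMulCommClass ℓ A A] [Group G]
    (H : Subgroup G) [Fintype H] [DecidableEq G] [DecidableEq (G ⧸ H)]

/-- The coset `wH` as a finset. -/
noncomputable def cosetFinset (w : G ⧸ H) : Finset G :=
  Finset.image (fun h : H => (Quotient.out w * h : G)) Finset.univ

omit [DecidableEq (G ⧸ H)] in
lemma mem_cosetFinset (w : G ⧸ H) (g : G) :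
    g ∈ cosetFinset H w ↔ QuotientGroup.mk g = w := by
  simp only [cosetFinset, Finset.mem_image, Finset.mem_univ, true_and]
  constructor
  · rintro ⟨h, rfl⟩
    rw [← Quotient.out_eq w, QuotientGroup.eq]
    simpa using h.2
  · intro hg
    refine ⟨⟨(Quotient.out w)⁻¹ * g, ?_⟩, by group⟩
    have : QuotientGroup.mk (Quotient.out w) = w := Quotient.out_eq w
    rw [← this] at hg
    exact (QuotientGroup.eq.mp hg.symm)

omit [DecidableEq (G ⧸ H)] in
lemma card_cosetFinset (w : G ⧸ H) : (cosetFinset H w).card = Fintype.card H := by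
  rw [cosetFinset, Finset.card_image_of_injective _ ?_, Finset.card_univ]
  intro a b hab
  exact Subtype.ext (mul_left_cancel hab)

end Aux

section Scalar

variable {R G : Type} [CommRing R] [DecidableEq G]

lemma sum_delta_sub (S : Finset G) {g : G} (hg : g ∈ S) (v : R)
    (hv : (S.card : R) * v = 1) :
    ∑ z ∈ S, ((if g = z then (1:R) else 0) - v) = 0 := by
  rw [Finset.sum_sub_distrib, Finset.sum_ite_eq, if_pos hg, Finset.sum_const,
    nsmul_eq_mul]
  linear_combination -hv

lemma sum_delta_sub' (S : Finset G) {g : G} (hg : g ∈ S) (v : R)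
    (hv : (S.card : R) * v = 1) :
    ∑ z ∈ S, ((if z = g then (1:R) else 0) - v) = 0 := by
  rw [Finset.sum_sub_distrib, Finset.sum_ite_eq', if_pos hg, Finset.sum_const,
    nsmul_eq_mul]
  linear_combination -hv

lemma sum_block (S : Finset G) {g g' : G} (hg : g ∈ S) (hg' : g' ∈ S) (v : R)
    (hv : (S.card : R) * v = 1) :
    ∑ z ∈ S, ((if g = z then (1:R) else 0) - v) * ((if z = g' then 1 else 0) - v)
      = (if g = g' then (1:R) else 0) - v := by
  have e : ∀ z ∈ S, ((if g = z then (1:R) else 0) - v) * ((if z = g' then 1 else 0) - v)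
      = ((if g = z then (if z = g' then (1:R) else 0) else 0)
        - v * (if g = z then 1 else 0) - v * (if z = g' then 1 else 0)) + v * v := by
    intro z _; split_ifs <;> ring
  rw [Finset.sum_congr rfl e, Finset.sum_add_distrib, Finset.sum_sub_distrib,
    Finset.sum_sub_distrib, ← Finset.mul_sum, ← Finset.mul_sum,
    Finset.sum_ite_eq, Finset.sum_ite_eq, Finset.sum_ite_eq', Finset.sum_const,
    nsmul_eq_mul]
  simp only [if_pos hg, if_pos hg', mul_one]
  split_ifs <;> linear_combination v * hv

end Scalar

section Entries

variable {ℓ A G : Type} [CommRing ℓ] [NonUnitalRing A] [Module ℓ A]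
    [IsScalarTower ℓ A A] [SMulCommClass ℓ A A] [Group G]
    (H : Subgroup G) [Fintype H] [DecidableEq G] [DecidableEq (G ⧸ H)]
    (w : G ⧸ H) (v c : ℓ)

lemma Vgen_nn : Vgen (A := A) H w v c none none = 0 := rfl

lemma Vgen_ns {g : G} (h : QuotientGroup.mk g = w) :
    Vgen (A := A) H w v c none (some g) = algebraMap ℓ (Unitization ℓ A) c := by
  simp [Vgen, h]

lemma Vgen_ns' {g : G} (h : ¬ QuotientGroup.mk g = w) :
    Vgen (A := A) H w v c none (some g) = 0 := by
  simp [Vgen, h]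

lemma Vgen_sn {g : G} (h : QuotientGroup.mk g = w) :
    Vgen (A := A) H w v c (some g) none = algebraMap ℓ (Unitization ℓ A) c := by
  simp [Vgen, h]

lemma Vgen_sn' {g : G} (h : ¬ QuotientGroup.mk g = w) :
    Vgen (A := A) H w v c (some g) none = 0 := by
  simp [Vgen, h]

lemma Vgen_ss {g g' : G} (h : QuotientGroup.mk g = w) (h' : QuotientGroup.mk g' = w) :
    Vgen (A := A) H w v c (some g) (some g')
      = algebraMap ℓ (Unitization ℓ A) ((if g = g' then 1 else 0) - v) := by
  simp only [Vgen, h, h', if_pos]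
  split_ifs <;> simp [map_sub]

lemma Vgen_ss_out {g g' : G} (h : ¬ QuotientGroup.mk g = w) :
    Vgen (A := A) H w v c (some g) (some g') = if g = g' then 1 else 0 := by
  simp [Vgen, h]

lemma Vgen_ss_mixed {g g' : G} (h : QuotientGroup.mk g = w)
    (h' : ¬ QuotientGroup.mk g' = w) :
    Vgen (A := A) H w v c (some g) (some g') = 0 := by
  simp [Vgen, h, h']

lemma Vgen_ss_mixed' {g g' : G} (h : ¬ QuotientGroup.mk g = w)
    (h' : QuotientGroup.mk g' = w) :
    Vgen (A := A) H w v c (some g) (some g') = 0 := by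
  have : g ≠ g' := fun e => h (e ▸ h')
  simp [Vgen, h, this]

lemma Vgen_row_support (x : Option G) :
    {y | Vgen (A := A) H w v c x y ≠ 0} ⊆
      ↑(insert none (insert x ((cosetFinset H w).image some))) := by
  intro z hz
  simp only [Set.mem_setOf_eq] at hz
  simp only [Finset.coe_insert, Set.mem_insert_iff, Finset.coe_image,
    Finset.mem_coe, Set.mem_image]
  match x, z with
  | _, none => exact Or.inl rfl
  | none, some g =>
    by_cases h : QuotientGroup.mk g = w
    · exact Or.inr (Or.inr ⟨g, (mem_cosetFinset H w g).2 h, rfl⟩)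
    · exact absurd (Vgen_ns' H w v c h) hz
  | some g, some g' =>
    by_cases h' : QuotientGroup.mk g' = w
    · exact Or.inr (Or.inr ⟨g', (mem_cosetFinset H w g').2 h', rfl⟩)
    · by_cases h : QuotientGroup.mk g = w
      · exact absurd (Vgen_ss_mixed H w v c h h') hz
      · have := Vgen_ss_out (A := A) H w v c (g := g) (g' := g') h
        rw [this] at hz
        have : g = g' := by by_contra hne; simp [hne] at hz
        exact Or.inr (Or.inl (by rw [this]))

lemma Vgen_symm (x y : Option G) :
    Vgen (A := A) H w v c x y = Vgen (A := A) H w v c y x := by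
  match x, y with
  | none, none => rfl
  | none, some g => rfl
  | some g, none => rfl
  | some g, some g' =>
    by_cases h : QuotientGroup.mk g = w <;> by_cases h' : QuotientGroup.mk g' = w
    · rw [Vgen_ss H w v c h h', Vgen_ss H w v c h' h]
      congr 1
      simp [eq_comm]
    · rw [Vgen_ss_mixed H w v c h h', Vgen_ss_mixed' H w v c h' h]
    · rw [Vgen_ss_mixed' H w v c h h', Vgen_ss_mixed H w v c h' h]
    · rw [Vgen_ss_out H w v c h, Vgen_ss_out H w v c h']
      simp [eq_comm]

end Entries

section Mul

variable {ℓ A G : Type} [CommRing ℓ] [NonUnitalRing A] [Module ℓ A]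
    [IsScalarTower ℓ A A] [SMulCommClass ℓ A A] [Group G]
    (H : Subgroup G) [Fintype H] [DecidableEq G] [DecidableEq (G ⧸ H)]

lemma Vgen_mul (w : G ⧸ H) (v c c' : ℓ)
    (hv : (Fintype.card H : ℓ) * v = 1) (hcc : c * c' = v) :
    gammaMul (Vgen (A := A) H w v c) (Vgen (A := A) H w v c') = gammaOne := by
  classical
  set Q := algebraMap ℓ (Unitization ℓ A) with hQdef
  set S : Finset G := cosetFinset H w with hSdef
  have hcard : (S.card : ℓ) * v = 1 := by
    rw [hSdef, card_cosetFinset]; exact hv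
  have hmem : ∀ g : G, g ∈ S ↔ QuotientGroup.mk g = w := mem_cosetFinset H w
  have hinj : ∀ a ∈ S, ∀ b ∈ S, some a = some b → a = b :=
    fun a _ b _ h => Option.some.inj h
  have hni : (none : Option G) ∉ S.image some := by simp
  funext x y
  show (∑ᶠ z, Vgen (A := A) H w v c x z * Vgen (A := A) H w v c' z y) = gammaOne x y
  match x with
  | none =>
    have hsupp : Function.support
        (fun z => Vgen (A := A) H w v c none z * Vgen (A := A) H w v c' z y)
        ⊆ ↑(insert none (S.image some)) := by
      intro z hz
      have hz1 : Vgen (A := A) H w v c none z ≠ 0 := fun h0 => hz (by simp [h0])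
      match z with
      | none => simp
      | some g =>
        by_cases h : QuotientGroup.mk g = w
        · simp only [Finset.coe_insert, Set.mem_insert_iff, Finset.coe_image,
            Set.mem_image, Finset.mem_coe]
          exact Or.inr ⟨g, (hmem g).2 h, rfl⟩
        · exact absurd (Vgen_ns' H w v c h) hz1
    rw [finsum_eq_sum_of_support_subset _ hsupp, Finset.sum_insert hni,
      Finset.sum_image hinj, Vgen_nn, zero_mul, zero_add]
    match y with
    | none =>
      have e : ∀ g ∈ S, Vgen (A := A) H w v c none (some g) *
          Vgen (A := A) H w v c' (some g) none = Q v := by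
        intro g hg
        rw [Vgen_ns H w v c ((hmem g).1 hg), Vgen_sn H w v c' ((hmem g).1 hg),
          ← map_mul, hcc]
      rw [Finset.sum_congr rfl e, Finset.sum_const, gammaOne, if_pos rfl,
        ← map_nsmul]
      rw [show S.card • v = (S.card : ℓ) * v from nsmul_eq_mul _ v, hcard, map_one]
    | some g' =>
      by_cases h' : QuotientGroup.mk g' = w
      · have e : ∀ g ∈ S, Vgen (A := A) H w v c none (some g) *
            Vgen (A := A) H w v c' (some g) (some g')
            = Q (c * ((if g = g' then 1 else 0) - v)) := by
          intro g hg
          rw [Vgen_ns H w v c ((hmem g).1 hg), Vgen_ss H w v c' ((hmem g).1 hg) h',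
            ← map_mul]
        rw [Finset.sum_congr rfl e, ← map_sum, ← Finset.mul_sum,
          sum_delta_sub' S ((hmem g').2 h') v hcard, mul_zero, map_zero]
        simp [gammaOne]
      · have e : ∀ g ∈ S, Vgen (A := A) H w v c none (some g) *
            Vgen (A := A) H w v c' (some g) (some g') = 0 := by
          intro g hg
          rw [Vgen_ss_mixed H w v c' ((hmem g).1 hg) h', mul_zero]
        rw [Finset.sum_congr rfl e, Finset.sum_const_zero]
        simp [gammaOne]
  | some g =>
    by_cases hg : QuotientGroup.mk g = w
    · -- g in the coset
      have hgS : g ∈ S := (hmem g).2 hg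
      have hsupp : Function.support
          (fun z => Vgen (A := A) H w v c (some g) z * Vgen (A := A) H w v c' z y)
          ⊆ ↑(insert none (S.image some)) := by
        intro z hz
        have hz1 : Vgen (A := A) H w v c (some g) z ≠ 0 := fun h0 => hz (by simp [h0])
        match z with
        | none => simp
        | some g'' =>
          by_cases h : QuotientGroup.mk g'' = w
          · simp only [Finset.coe_insert, Set.mem_insert_iff, Finset.coe_image,
              Set.mem_image, Finset.mem_coe]
            exact Or.inr ⟨g'', (hmem g'').2 h, rfl⟩
          · exact absurd (Vgen_ss_mixed H w v c hg h) hz1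
      rw [finsum_eq_sum_of_support_subset _ hsupp, Finset.sum_insert hni,
        Finset.sum_image hinj, Vgen_sn H w v c hg]
      match y with
      | none =>
        have e : ∀ z ∈ S, Vgen (A := A) H w v c (some g) (some z) *
            Vgen (A := A) H w v c' (some z) none
            = Q (((if g = z then 1 else 0) - v) * c') := by
          intro z hz
          rw [Vgen_ss H w v c hg ((hmem z).1 hz), Vgen_sn H w v c' ((hmem z).1 hz),
            ← map_mul]
        rw [Finset.sum_congr rfl e, ← map_sum, ← Finset.sum_mul,
          sum_delta_sub S hgS v hcard, zero_mul, map_zero, Vgen_nn, mul_zero,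
          zero_add]
        simp [gammaOne]
      | some g' =>
        by_cases h' : QuotientGroup.mk g' = w
        · have e : ∀ z ∈ S, Vgen (A := A) H w v c (some g) (some z) *
              Vgen (A := A) H w v c' (some z) (some g')
              = Q (((if g = z then 1 else 0) - v) * ((if z = g' then 1 else 0) - v)) := by
            intro z hz
            rw [Vgen_ss H w v c hg ((hmem z).1 hz),
              Vgen_ss H w v c' ((hmem z).1 hz) h', ← map_mul]
          rw [Finset.sum_congr rfl e, ← map_sum,
            sum_block S hgS ((hmem g').2 h') v hcard, Vgen_ns H w v c' h',
            ← map_mul, hcc, ← map_add]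
          have : v + ((if g = g' then (1:ℓ) else 0) - v) = if g = g' then 1 else 0 := by
            ring
          rw [this]
          by_cases hgg' : g = g' <;> simp [gammaOne, hgg']
        · have e : ∀ z ∈ S, Vgen (A := A) H w v c (some g) (some z) *
              Vgen (A := A) H w v c' (some z) (some g') = 0 := by
            intro z hz
            rw [Vgen_ss_mixed H w v c' ((hmem z).1 hz) h', mul_zero]
          rw [Finset.sum_congr rfl e, Finset.sum_const_zero, Vgen_ns' H w v c' h',
            mul_zero, zero_add]
          have : g ≠ g' := fun e' => h' (e' ▸ hg)
          simp [gammaOne, this]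
    · -- g outside the coset
      have hsupp : Function.support
          (fun z => Vgen (A := A) H w v c (some g) z * Vgen (A := A) H w v c' z y)
          ⊆ ↑({some g} : Finset (Option G)) := by
        intro z hz
        have hz1 : Vgen (A := A) H w v c (some g) z ≠ 0 := fun h0 => hz (by simp [h0])
        match z with
        | none => exact absurd (Vgen_sn' H w v c hg) hz1
        | some g'' =>
          rw [Vgen_ss_out H w v c hg] at hz1
          have : g = g'' := by by_contra hne; simp [hne] at hz1
          simp [this]
      rw [finsum_eq_sum_of_support_subset _ hsupp, Finset.sum_singleton,
        Vgen_ss_out H w v c hg, if_pos rfl, one_mul]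
      match y with
      | none =>
        rw [Vgen_sn' H w v c' hg]
        simp [gammaOne]
      | some g' =>
        by_cases h' : QuotientGroup.mk g' = w
        · rw [Vgen_ss_mixed' H w v c' hg h']
          have : g ≠ g' := fun e' => hg (e' ▸ h')
          simp [gammaOne, this]
        · rw [Vgen_ss_out H w v c' hg]
          by_cases hgg' : g = g' <;> simp [gammaOne, hgg']

end Mul

/-- `V_{wH}` and the displayed candidate are row- and
column-finite (i.e. lie in `Γ_{G₊}(Ã)`) and are mutually inverse there. -/
theorem stmt12 {ℓ A G : Type} [CommRing ℓ] [NonUnitalRing A] [Module ℓ A]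
    [IsScalarTower ℓ A A] [SMulCommClass ℓ A A] [Group G]
    (H : Subgroup G) [Fintype H] [DecidableEq G] [DecidableEq (G ⧸ H)]
    (w : G ⧸ H) (v : ℓ) (hv : (Fintype.card H : ℓ) * v = 1) :
    (∀ x, {y | Vgen (A := A) H w v 1 x y ≠ 0}.Finite) ∧
    (∀ y, {x | Vgen (A := A) H w v 1 x y ≠ 0}.Finite) ∧
    (∀ x, {y | Vgen (A := A) H w v v x y ≠ 0}.Finite) ∧
    (∀ y, {x | Vgen (A := A) H w v v x y ≠ 0}.Finite) ∧
    gammaMul (Vgen (A := A) H w v 1) (Vgen (A := A) H w v v) = gammaOne ∧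
    gammaMul (Vgen (A := A) H w v v) (Vgen (A := A) H w v 1) = gammaOne := by
  refine ⟨fun x => ?_, fun y => ?_, fun x => ?_, fun y => ?_, ?_, ?_⟩
  · exact Set.Finite.subset (Finset.finite_toSet _) (Vgen_row_support H w v 1 x)
  · refine Set.Finite.subset (Finset.finite_toSet
      (insert none (insert y ((cosetFinset H w).image some)))) ?_
    intro x hx
    refine Vgen_row_support (A := A) H w v 1 y ?_
    rw [Set.mem_setOf_eq, Vgen_symm]
    exact hx
  · exact Set.Finite.subset (Finset.finite_toSet _) (Vgen_row_support H w v v x)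
  · refine Set.Finite.subset (Finset.finite_toSet
      (insert none (insert y ((cosetFinset H w).image some)))) ?_
    intro x hx
    refine Vgen_row_support (A := A) H w v v y ?_
    rw [Set.mem_setOf_eq, Vgen_symm]
    exact hx
  · exact Vgen_mul H w v 1 v hv (by rw [one_mul])
  · exact Vgen_mul H w v v 1 hv (by rw [mul_one])
end
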